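/- arXiv:2007.05195 — 4 statements merged into one kernel-verified Lean document; each statement's English description precedes it below -/
import Mathlib

section
/- Let G be a finite multigraph, D an orientation of G, and q ≥ 2 an integer. Then D admits a nowhere-zero q-flow (i.e., an integer-valued flow φ with 1 ≤ |φ(e)| ≤ q−1 for every edge e) if and only if for every additive abelian group Γ of order q, D admits a nowhere-zero Γ-flow. -/
/-- A finite multigraph on vertex type `V` with edge type `E`: each edge `e` has two
(possibly equal) endpoints `fst e` and `snd e`. -/
structure Multigraph (V E : Type) where
  fst : E → V
  snd : E → V

namespace Multigraph

variable {V E : Type}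

/-- `a` and `b` are joined by some edge belonging to the edge set `F`. -/
def edgeRelOn (G : Multigraph V E) (F : Set E) (a b : V) : Prop :=
  ∃ e ∈ F, (G.fst e = a ∧ G.snd e = b) ∨ (G.fst e = b ∧ G.snd e = a)

/-- Reachability in the spanning subgraph `(V, F)`. -/
def Reach (G : Multigraph V E) (F : Set E) : V → V → Prop :=
  Relation.EqvGen (G.edgeRelOn F)

/-- The setoid on `V` whose classes are the connected components of the
spanning subgraph `(V, F)`. -/
def reachSetoid (G : Multigraph V E) (F : Set E) : Setoid V :=
  Relation.EqvGen.setoid (G.edgeRelOn F)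

/-- The number of connected components of the spanning subgraph `(V, F)`. -/
noncomputable def ncomp (G : Multigraph V E) (F : Set E) : ℕ :=
  Nat.card (Quotient (G.reachSetoid F))

/-- The number of connected components of `G`. -/
noncomputable def numComponents (G : Multigraph V E) : ℕ :=
  G.ncomp Set.univ

/-- `G` is connected. -/
def Connected (G : Multigraph V E) : Prop :=
  G.numComponents = 1

/-- An edge is a bridge if deleting it increases the number of connected components. -/
def IsBridge (G : Multigraph V E) (e : E) : Prop :=
  G.numComponents < G.ncomp {e' | e' ≠ e}

/-- `G` has no bridge. -/
def Bridgeless (G : Multigraph V E) : Prop :=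
  ∀ e, ¬ G.IsBridge e

/-- `G` has no loops. -/
def Loopless (G : Multigraph V E) : Prop :=
  ∀ e, G.fst e ≠ G.snd e

/-- Deleting a set `S` of vertices (and all edges meeting `S`). -/
def deleteVerts (G : Multigraph V E) (S : Set V) :
    Multigraph {v // v ∉ S} {e // G.fst e ∉ S ∧ G.snd e ∉ S} where
  fst := fun e => ⟨G.fst e.1, e.2.1⟩
  snd := fun e => ⟨G.snd e.1, e.2.2⟩

/-- A cut-vertex: a vertex whose deletion increases the number of components. -/
def IsCutVertex (G : Multigraph V E) (x : V) : Prop :=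
  G.numComponents < (G.deleteVerts {x}).numComponents

/-- A graph is non-separable if it has at most one vertex and at most one edge, or it is
connected, loopless and has no cut-vertex. -/
def NonSeparable (G : Multigraph V E) : Prop :=
  (Nat.card V ≤ 1 ∧ Nat.card E ≤ 1) ∨
    (G.Connected ∧ G.Loopless ∧ ∀ x, ¬ G.IsCutVertex x)

/-- The degree of a vertex, counted with edge multiplicity; a loop contributes `2`. -/
noncomputable def degree (G : Multigraph V E) (v : V) : ℕ :=
  Nat.card {e | G.fst e = v} + Nat.card {e | G.snd e = v}

/-- The flow polynomial `F(G,q) = ∑_{E'⊆E} (−1)^{|E|−|E'|} q^{|E'|+c(E')−|V|}`,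
where `c(E')` is the number of connected components of the spanning subgraph `(V,E')`. -/
noncomputable def flowPoly (G : Multigraph V E) [Finite V] [Finite E] : Polynomial ℝ :=
  letI : Fintype E := Fintype.ofFinite E
  ∑ E' : Finset E, (-1 : Polynomial ℝ) ^ (Nat.card E - E'.card) *
    Polynomial.X ^ (E'.card + G.ncomp ↑E' - Nat.card V)

/-- A subgraph of a multigraph: a set of vertices and a set of edges with both
endpoints among those vertices. -/
structure Subgraph (G : Multigraph V E) where
  verts : Set V
  edges : Set E
  fst_mem : ∀ ⦃e⦄, e ∈ edges → G.fst e ∈ verts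
  snd_mem : ∀ ⦃e⦄, e ∈ edges → G.snd e ∈ verts

/-- A subgraph, viewed as a multigraph in its own right. -/
def Subgraph.toMultigraph {G : Multigraph V E} (H : G.Subgraph) :
    Multigraph H.verts H.edges where
  fst := fun e => ⟨G.fst e.1, H.fst_mem e.2⟩
  snd := fun e => ⟨G.snd e.1, H.snd_mem e.2⟩

/-- `H` is a connected component of `G`: its vertex set is the set of vertices reachable
from some vertex, and its edges are all the edges of `G` joining its vertices. -/
def IsComponent {G : Multigraph V E} (H : G.Subgraph) : Prop :=
  (∃ v ∈ H.verts, ∀ u, u ∈ H.verts ↔ G.Reach Set.univ v u) ∧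
    ∀ e, e ∈ H.edges ↔ (G.fst e ∈ H.verts ∧ G.snd e ∈ H.verts)

/-- `H` is a block of `G`: a maximal non-separable subgraph. -/
def IsBlock {G : Multigraph V E} (H : G.Subgraph) : Prop :=
  H.toMultigraph.NonSeparable ∧
    ∀ H' : G.Subgraph, H'.toMultigraph.NonSeparable →
      H.verts ⊆ H'.verts → H.edges ⊆ H'.edges → H' = H

/-- A trivial block: a single vertex and no edges. -/
def Subgraph.IsTrivial {G : Multigraph V E} (H : G.Subgraph) : Prop :=
  (∃ v, H.verts = {v}) ∧ H.edges = ∅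

/-- An orientation of a multigraph: each edge is given a tail and a head,
consistent with its two endpoints. -/
structure Orientation (G : Multigraph V E) where
  tail : E → V
  head : E → V
  consistent : ∀ e, (tail e = G.fst e ∧ head e = G.snd e) ∨
    (tail e = G.snd e ∧ head e = G.fst e)

open Classical in
/-- A `Γ`-flow on an orientation `D`: at every vertex, the sum of the values on
the arcs with that tail equals the sum of the values on the arcs with that head. -/
noncomputable def Orientation.IsFlow {G : Multigraph V E} [Fintype E]
    (D : G.Orientation) {Γ : Type} [AddCommGroup Γ] (φ : E → Γ) : Prop :=
  ∀ v : V, ∑ e ∈ Finset.univ.filter (fun e => D.tail e = v), φ e =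
    ∑ e ∈ Finset.univ.filter (fun e => D.head e = v), φ e

/-- Deleting an edge. -/
def deleteEdge (G : Multigraph V E) (e₀ : E) : Multigraph V {e // e ≠ e₀} where
  fst := fun e => G.fst e.1
  snd := fun e => G.snd e.1

/-- Adding a new edge joining `x` and `y`. -/
def addEdge (G : Multigraph V E) (x y : V) : Multigraph V (E ⊕ Unit) where
  fst := Sum.elim G.fst fun _ => x
  snd := Sum.elim G.snd fun _ => y

/-- Contracting a set `F` of edges: vertices joined through `F` are identified,
and the edges of `F` are removed. -/
def contract (G : Multigraph V E) (F : Set E) :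
    Multigraph (Quotient (G.reachSetoid F)) {e // e ∉ F} where
  fst := fun e => Quotient.mk _ (G.fst e.1)
  snd := fun e => Quotient.mk _ (G.snd e.1)

/-- The number of proper colourings of the vertices of `G` with `n` colours. -/
noncomputable def properColorings (G : Multigraph V E) (n : ℕ) : ℕ :=
  Nat.card {f : V → Fin n // ∀ e, f (G.fst e) ≠ f (G.snd e)}

/-- An isomorphism of multigraphs. -/
structure Iso {V' E' : Type} (G : Multigraph V E) (G' : Multigraph V' E') where
  vmap : V ≃ V'
  emap : E ≃ E'
  ends : ∀ e, (G'.fst (emap e) = vmap (G.fst e) ∧ G'.snd (emap e) = vmap (G.snd e)) ∨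
    (G'.fst (emap e) = vmap (G.snd e) ∧ G'.snd (emap e) = vmap (G.fst e))

open Classical in
/-- Subdividing the edge `e₀`: it is replaced by a path of length two through a new vertex. -/
noncomputable def subdivide (G : Multigraph V E) (e₀ : E) :
    Multigraph (V ⊕ Unit) (E ⊕ Unit) where
  fst := Sum.elim (fun e => Sum.inl (G.fst e)) fun _ => Sum.inr ()
  snd := Sum.elim (fun e => if e = e₀ then Sum.inr () else Sum.inl (G.snd e))
    fun _ => Sum.inl (G.snd e₀)

/-- `G` is a subdivision of `H`. -/
inductive IsSubdivisionOf :
    {V E V' E' : Type} → Multigraph V E → Multigraph V' E' → Prop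
  | of_iso {V E V' E'} {G : Multigraph V E} {H : Multigraph V' E'} :
      Iso G H → IsSubdivisionOf G H
  | step {V E V' E'} {G : Multigraph V E} {H : Multigraph V' E'} (e : E) :
      IsSubdivisionOf G H → IsSubdivisionOf (G.subdivide e) H
  | iso_left {V₁ E₁ V₂ E₂ V' E'} {G₁ : Multigraph V₁ E₁} {G₂ : Multigraph V₂ E₂}
      {H : Multigraph V' E'} :
      Iso G₁ G₂ → IsSubdivisionOf G₂ H → IsSubdivisionOf G₁ H

/-- A multigraph is 3-connected if it has at least 4 vertices and remains connected
after deleting any set of fewer than 3 vertices. -/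
def ThreeConnected (G : Multigraph V E) : Prop :=
  4 ≤ Nat.card V ∧ ∀ S : Set V, S.ncard < 3 → (G.deleteVerts S).Connected

/-- `G` is (isomorphic to) the multigraph `Z_k` with two vertices joined by `k`
parallel edges. -/
def IsZk (G : Multigraph V E) (k : ℕ) : Prop :=
  Nat.card V = 2 ∧ Nat.card E = k ∧ G.Loopless

/-- `G` is essentially 3-connected: a subdivision of a 3-connected graph,
or `Z_k` for some `k ≥ 3`. -/
def EssentiallyThreeConnected (G : Multigraph V E) : Prop :=
  (∃ (V' E' : Type) (H : Multigraph V' E'), H.ThreeConnected ∧ G.IsSubdivisionOf H) ∨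
    ∃ k, 3 ≤ k ∧ G.IsZk k

end Multigraph

section NZAux
set_option linter.unusedSectionVars false

open Finset Multigraph

variable {V E : Type} [Fintype V] [Fintype E] {G : Multigraph V E}
variable {Γ Γ' : Type} [AddCommGroup Γ] [AddCommGroup Γ']

open Classical in
/-- The boundary of `φ` at a vertex. -/
noncomputable def bnd (D : G.Orientation) (φ : E → Γ) : V → Γ := fun v =>
  ∑ e, ((if D.tail e = v then φ e else 0) - (if D.head e = v then φ e else 0))

lemma isFlow_iff_bnd (D : G.Orientation) (φ : E → Γ) :
    D.IsFlow φ ↔ ∀ v, bnd D φ v = 0 := by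
  classical
  unfold Multigraph.Orientation.IsFlow bnd
  refine forall_congr' fun v => ?_
  rw [Finset.sum_sub_distrib, sub_eq_zero]
  simp [Finset.sum_filter]

lemma bnd_add (D : G.Orientation) (φ ψ : E → Γ) (v : V) :
    bnd D (φ + ψ) v = bnd D φ v + bnd D ψ v := by
  classical
  unfold bnd
  rw [← Finset.sum_add_distrib]
  refine Finset.sum_congr rfl fun e _ => ?_
  simp only [Pi.add_apply]
  split_ifs <;> abel

/-- The boundary as an additive group hom. -/
noncomputable def bndHom (D : G.Orientation) : (E → Γ) →+ (V → Γ) where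
  toFun := bnd D
  map_zero' := by
    classical
    funext v; unfold bnd; simp
  map_add' φ ψ := funext fun v => bnd_add D φ ψ v

lemma bnd_map (D : G.Orientation) (g : Γ →+ Γ') (φ : E → Γ) (v : V) :
    bnd D (fun e => g (φ e)) v = g (bnd D φ v) := by
  classical
  unfold bnd
  rw [map_sum]
  refine Finset.sum_congr rfl fun e _ => ?_
  rw [map_sub, apply_ite g, apply_ite g, map_zero]

open Classical in
lemma cut_bnd (D : G.Orientation) (φ : E → Γ) (T : Finset V) :
    ∑ v ∈ T, bnd D φ v =
      ∑ e, ((if D.tail e ∈ T then φ e else 0) - (if D.head e ∈ T then φ e else 0)) := by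
  classical
  unfold bnd
  rw [Finset.sum_comm]
  refine Finset.sum_congr rfl fun e _ => ?_
  rw [Finset.sum_sub_distrib, Finset.sum_ite_eq, Finset.sum_ite_eq]

lemma sum_bnd (D : G.Orientation) (φ : E → Γ) : ∑ v, bnd D φ v = 0 := by
  classical
  rw [cut_bnd]
  simp

lemma isFlow_map (D : G.Orientation) (g : Γ →+ Γ') {φ : E → Γ} (h : D.IsFlow φ) :
    D.IsFlow (fun e => g (φ e)) := by
  rw [isFlow_iff_bnd] at h ⊢
  intro v; rw [bnd_map D g φ v, h v, map_zero]

lemma int_flow_to_zmod (D : G.Orientation) (q : ℕ) [NeZero q] (φ : E → ℤ)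
    (hf : D.IsFlow φ) (hb : ∀ e, 1 ≤ |φ e| ∧ |φ e| ≤ (q : ℤ) - 1) :
    ∃ f : E → ZMod q, D.IsFlow f ∧ ∀ e, f e ≠ 0 := by
  refine ⟨fun e => ((φ e : ℤ) : ZMod q), isFlow_map D (Int.castAddHom (ZMod q)) hf, ?_⟩
  intro e h
  rw [ZMod.intCast_zmod_eq_zero_iff_dvd] at h
  have h2 : (q : ℤ) ≤ |φ e| := Int.le_of_dvd (lt_of_lt_of_le zero_lt_one (hb e).1)
    ((dvd_abs _ _).mpr h)
  have := (hb e).2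
  omega

/-- The subgroup of functions supported inside `F`. -/
def Wsub (F : Finset E) : AddSubgroup (E → Γ) where
  carrier := {φ | ∀ e ∉ F, φ e = 0}
  add_mem' := by intro a b ha hb e he; show a e + b e = 0; rw [ha e he, hb e he, add_zero]
  zero_mem' := fun e _ => rfl
  neg_mem' := by intro a ha e he; show -(a e) = 0; rw [ha e he, neg_zero]

open Classical in
/-- Summing a function over the connected components of `(V, F)`. -/
noncomputable def sigHom (G : Multigraph V E) (F : Set E) :
    (V → Γ) →+ (Quotient (G.reachSetoid F) → Γ) where
  toFun g := fun c => ∑ v ∈ univ.filter (fun v => Quotient.mk (G.reachSetoid F) v = c), g v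
  map_zero' := by funext c; simp
  map_add' g h := by funext c; simp [Finset.sum_add_distrib]

open Classical in
lemma sigHom_surjective (G : Multigraph V E) (F : Set E) :
    Function.Surjective (sigHom (Γ := Γ) G F) := by
  intro h
  refine ⟨fun v => if (Quotient.mk (G.reachSetoid F) v).out = v
    then h (Quotient.mk (G.reachSetoid F) v) else 0, ?_⟩
  funext c
  show (∑ v ∈ univ.filter (fun v => Quotient.mk (G.reachSetoid F) v = c), _) = h c
  rw [Finset.sum_congr rfl (g := fun v => if c.out = v then h c else 0) ?_]
  · rw [Finset.sum_ite_eq]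
    rw [if_pos (by simp [Quotient.out_eq])]
  · intro v hv
    rw [Finset.mem_filter] at hv
    rw [← hv.2]

open Classical in
lemma bnd_single (D : G.Orientation) (e : E) (b : Γ) :
    bnd D (fun e' => if e' = e then b else 0) =
      fun v => (if D.tail e = v then b else 0) - (if D.head e = v then b else 0) := by
  funext v
  unfold bnd
  rw [Finset.sum_eq_single e]
  · simp
  · intro e' _ hne; simp [hne]
  · intro h; exact absurd (mem_univ e) h

open Classical in
lemma exists_bnd_preimage (D : G.Orientation) (F : Set E) {u w : V}
    (h : Relation.EqvGen (G.edgeRelOn F) u w) (a : Γ) :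
    ∃ φ : E → Γ, (∀ e, e ∉ F → φ e = 0) ∧
      bnd D φ = fun v => (if u = v then a else 0) - (if w = v then a else 0) := by
  induction h with
  | rel u w huw =>
      obtain ⟨e, heF, hor⟩ := huw
      have hcase : (D.tail e = u ∧ D.head e = w) ∨ (D.tail e = w ∧ D.head e = u) := by
        rcases hor with ⟨h1, h2⟩ | ⟨h1, h2⟩ <;> rcases D.consistent e with ⟨h3, h4⟩ | ⟨h3, h4⟩
        · exact Or.inl ⟨h3.trans h1, h4.trans h2⟩
        · exact Or.inr ⟨h3.trans h2, h4.trans h1⟩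
        · exact Or.inr ⟨h3.trans h1, h4.trans h2⟩
        · exact Or.inl ⟨h3.trans h2, h4.trans h1⟩
      rcases hcase with ⟨h1, h2⟩ | ⟨h1, h2⟩
      · exact ⟨fun e' => if e' = e then a else 0,
          fun e' he' => if_neg (by rintro rfl; exact he' heF),
          by rw [bnd_single, h1, h2]⟩
      · refine ⟨fun e' => if e' = e then -a else 0,
          fun e' he' => if_neg (by rintro rfl; exact he' heF), ?_⟩
        rw [bnd_single, h1, h2]
        funext v
        split_ifs <;> abel
  | refl u =>
      refine ⟨0, fun _ _ => rfl, ?_⟩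
      rw [show bnd D (0 : E → Γ) = 0 from map_zero (bndHom D)]
      funext v; simp
  | symm u w _ ih =>
      obtain ⟨φ, h1, h2⟩ := ih
      refine ⟨-φ, fun e he => by simp [h1 e he], ?_⟩
      rw [show bnd D (-φ) = -(bnd D φ) from map_neg (bndHom D) φ, h2]
      funext v
      simp only [Pi.neg_apply]
      abel
  | trans u v w _ _ ih1 ih2 =>
      obtain ⟨φ1, hs1, hb1⟩ := ih1
      obtain ⟨φ2, hs2, hb2⟩ := ih2
      refine ⟨φ1 + φ2, fun e he => by simp [hs1 e he, hs2 e he], ?_⟩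
      rw [show bnd D (φ1 + φ2) = bnd D φ1 + bnd D φ2 from map_add (bndHom D) φ1 φ2, hb1, hb2]
      funext x
      simp only [Pi.add_apply]
      split_ifs <;> abel

open Classical in
lemma range_eq_ker (D : G.Orientation) (F : Finset E) :
    ((bndHom (Γ := Γ) D).comp (Wsub F).subtype).range = (sigHom G (↑F : Set E)).ker := by
  apply le_antisymm
  · rintro g ⟨⟨φ, hφ⟩, rfl⟩
    rw [AddMonoidHom.mem_ker]
    funext c
    show (∑ v ∈ univ.filter (fun v => Quotient.mk (G.reachSetoid (↑F : Set E)) v = c),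
      bnd D φ v) = 0
    rw [cut_bnd]
    refine Finset.sum_eq_zero fun e _ => ?_
    by_cases heF : e ∈ F
    · have hrel : Quotient.mk (G.reachSetoid (↑F : Set E)) (D.tail e) =
          Quotient.mk (G.reachSetoid (↑F : Set E)) (D.head e) := by
        apply Quotient.sound
        have hfs : Relation.EqvGen (G.edgeRelOn (↑F : Set E)) (G.fst e) (G.snd e) :=
          Relation.EqvGen.rel _ _ ⟨e, heF, Or.inl ⟨rfl, rfl⟩⟩
        rcases D.consistent e with ⟨h1, h2⟩ | ⟨h1, h2⟩
        · rw [h1, h2]; exact hfs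
        · rw [h1, h2]; exact hfs.symm _ _
      simp only [Finset.mem_filter, Finset.mem_univ, true_and]
      rw [hrel, sub_self]
    · have : φ e = 0 := hφ e heF
      simp [this]
  · intro g hg
    rw [AddMonoidHom.mem_ker] at hg
    have hre : ∀ v : V, ∃ φ : E → Γ, (∀ e, e ∉ (↑F : Set E) → φ e = 0) ∧
        bnd D φ = fun u => (if v = u then g v else 0) -
          (if (Quotient.mk (G.reachSetoid (↑F : Set E)) v).out = u then g v else 0) :=
      fun v => exists_bnd_preimage D (↑F : Set E)
        (show Relation.EqvGen (G.edgeRelOn (↑F : Set E)) v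
            (Quotient.mk (G.reachSetoid (↑F : Set E)) v).out from
          @Quotient.exact V (G.reachSetoid (↑F : Set E)) v _
            (Quotient.out_eq (Quotient.mk (G.reachSetoid (↑F : Set E)) v)).symm) (g v)
    choose Φ hΦs hΦb using hre
    have hmem : (∑ v, Φ v) ∈ Wsub (Γ := Γ) F := by
      intro e he
      rw [Finset.sum_apply]
      exact Finset.sum_eq_zero fun v _ => hΦs v e he
    refine ⟨⟨∑ v, Φ v, hmem⟩, ?_⟩
    show bnd D (∑ v, Φ v) = g
    rw [show bnd D (∑ v, Φ v) = ∑ v, bnd D (Φ v) from map_sum (bndHom D) Φ univ]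
    funext u
    rw [Finset.sum_apply]
    have hterm : ∀ v : V, bnd D (Φ v) u = (if v = u then g v else 0) -
        (if (Quotient.mk (G.reachSetoid (↑F : Set E)) v).out = u then g v else 0) :=
      fun v => congrFun (hΦb v) u
    rw [Finset.sum_congr rfl fun v _ => hterm v, Finset.sum_sub_distrib]
    have hfirst : ∑ v, (if v = u then g v else 0) = g u := by
      rw [Finset.sum_ite_eq' univ u g]; simp
    have hsecond : (∑ v : V,
        if (Quotient.mk (G.reachSetoid (↑F : Set E)) v).out = u then g v else 0) = 0 := by
      by_cases hu : (Quotient.mk (G.reachSetoid (↑F : Set E)) u).out = u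
      · have hcond : ∀ v : V, ((Quotient.mk (G.reachSetoid (↑F : Set E)) v).out = u) ↔
            (Quotient.mk (G.reachSetoid (↑F : Set E)) v =
              Quotient.mk (G.reachSetoid (↑F : Set E)) u) := by
          intro v
          constructor
          · intro h; rw [← h, Quotient.out_eq]
          · intro h; rw [h, hu]
        have : (∑ v : V,
            if (Quotient.mk (G.reachSetoid (↑F : Set E)) v).out = u then g v else 0) =
            ∑ v ∈ univ.filter (fun v => Quotient.mk (G.reachSetoid (↑F : Set E)) v =
              Quotient.mk (G.reachSetoid (↑F : Set E)) u), g v := by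
          rw [Finset.sum_filter]
          exact Finset.sum_congr rfl fun v _ => if_congr (hcond v) rfl rfl
        rw [this]
        have := congrFun hg (Quotient.mk (G.reachSetoid (↑F : Set E)) u)
        simpa [sigHom] using this
      · refine Finset.sum_eq_zero fun v _ => if_neg fun h => ?_
        have h2 : Quotient.mk (G.reachSetoid (↑F : Set E)) u =
            Quotient.mk (G.reachSetoid (↑F : Set E)) v := by
          rw [← h, Quotient.out_eq]
        exact hu (by rw [h2]; exact h)
    rw [hfirst, hsecond, sub_zero]

open Classical in
lemma card_flowsSupp_mul (D : G.Orientation) [Fintype Γ] (F : Finset E) :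
    Nat.card {φ : E → Γ // D.IsFlow φ ∧ ∀ e ∉ F, φ e = 0} * (Nat.card Γ) ^ (Fintype.card V)
      = (Nat.card Γ) ^ (F.card + G.ncomp ↑F) := by
  set q := Nat.card Γ with hqdef
  set W : AddSubgroup (E → Γ) := Wsub F with hWdef
  set f : ↥W →+ (V → Γ) := (bndHom D).comp W.subtype with hfdef
  set σ : (V → Γ) →+ (Quotient (G.reachSetoid (↑F : Set E)) → Γ) :=
    sigHom G (↑F : Set E) with hσdef
  have hW : Nat.card ↥W = q ^ F.card := by
    have e1 : ↥W ≃ ({e // e ∈ F} → Γ) :=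
      { toFun := fun x ef => x.1 ef.1,
        invFun := fun g => ⟨fun e => if h : e ∈ F then g ⟨e, h⟩ else 0,
          fun e he => dif_neg he⟩,
        left_inv := by
          intro x
          ext e
          by_cases h : e ∈ F
          · simp [h]
          · simp [h, (x.2 e h).symm]
        right_inv := by intro g; funext ef; simp }
    rw [Nat.card_congr e1, Nat.card_fun]
    congr 1
    exact Nat.card_eq_finsetCard F
  have hker : Nat.card {φ : E → Γ // D.IsFlow φ ∧ ∀ e ∉ F, φ e = 0} = Nat.card ↥f.ker := by
    refine Nat.card_congr
      { toFun := fun x => ⟨⟨x.1, fun e he => x.2.2 e he⟩, by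
          rw [AddMonoidHom.mem_ker]
          exact funext ((isFlow_iff_bnd D x.1).1 x.2.1)⟩,
        invFun := fun y => ⟨y.1.1, (isFlow_iff_bnd D y.1.1).2
          (fun v => congrFun (AddMonoidHom.mem_ker.mp y.2) v), fun e he => y.1.2 e he⟩,
        left_inv := fun x => rfl,
        right_inv := fun y => rfl }
  have h1 : Nat.card ↥W = Nat.card ↥f.range * Nat.card ↥f.ker := by
    rw [AddSubgroup.card_eq_card_quotient_mul_card_addSubgroup f.ker]
    rw [Nat.card_congr (QuotientAddGroup.quotientKerEquivRange f).toEquiv]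
  have hrange : f.range = σ.ker := range_eq_ker D F
  have h2 : Nat.card (V → Γ) = Nat.card ↥σ.range * Nat.card ↥σ.ker := by
    rw [AddSubgroup.card_eq_card_quotient_mul_card_addSubgroup σ.ker]
    rw [Nat.card_congr (QuotientAddGroup.quotientKerEquivRange σ).toEquiv]
  have hσr : Nat.card ↥σ.range = q ^ (G.ncomp (↑F : Set E)) := by
    rw [AddMonoidHom.range_eq_top.2 (sigHom_surjective G (↑F : Set E))]
    rw [Nat.card_congr AddSubgroup.topEquiv.toEquiv, Nat.card_fun]
    rfl
  have hVΓ : Nat.card (V → Γ) = q ^ (Fintype.card V) := by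
    rw [Nat.card_fun]
    congr 1
    exact Nat.card_eq_fintype_card
  rw [hker]
  calc Nat.card ↥f.ker * q ^ (Fintype.card V)
      = Nat.card ↥f.ker * (Nat.card ↥σ.range * Nat.card ↥σ.ker) := by rw [← h2, hVΓ]
    _ = (Nat.card ↥f.range * Nat.card ↥f.ker) * Nat.card ↥σ.range := by
        rw [hrange]; ring
    _ = q ^ F.card * q ^ (G.ncomp (↑F : Set E)) := by rw [← h1, hW, hσr]
    _ = q ^ (F.card + G.ncomp (↑F : Set E)) := (pow_add q _ _).symm

open Classical in
/-- The number of nowhere-zero `Γ`-flows. -/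
noncomputable def NNZ (D : G.Orientation) (Γ : Type) [AddCommGroup Γ] : ℕ :=
  Nat.card {φ : E → Γ // D.IsFlow φ ∧ ∀ e, φ e ≠ 0}

open Classical in
lemma NNZ_int (D : G.Orientation) [Fintype Γ] :
    (NNZ D Γ : ℤ) = ∑ F : Finset E, (-1 : ℤ) ^ (Fᶜ.card) *
      (Nat.card {φ : E → Γ // D.IsFlow φ ∧ ∀ e ∉ F, φ e = 0} : ℤ) := by
  classical
  have hcard : ∀ p : (E → Γ) → Prop, (Nat.card {φ : E → Γ // D.IsFlow φ ∧ p φ} : ℤ)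
      = ∑ φ : E → Γ, (if D.IsFlow φ ∧ p φ then (1 : ℤ) else 0) := by
    intro p
    rw [Nat.card_eq_fintype_card, Fintype.card_subtype, Finset.card_filter]
    push_cast
    rfl
  rw [NNZ, hcard (fun φ => ∀ e, φ e ≠ 0)]
  rw [Finset.sum_congr rfl (fun (F : Finset E) (_ : F ∈ univ) => by
    rw [hcard (fun φ => ∀ e ∉ F, φ e = 0), Finset.mul_sum])]
  rw [Finset.sum_comm]
  refine Finset.sum_congr rfl fun φ _ => ?_
  by_cases hf : D.IsFlow φ
  · simp only [hf, true_and]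
    set Z : Finset E := univ.filter (fun e => φ e = 0) with hZ
    have step1 : (∑ F : Finset E, (-1 : ℤ) ^ (Fᶜ.card) *
        (if ∀ e ∉ F, φ e = 0 then (1 : ℤ) else 0)) =
        ∑ T : Finset E, (-1 : ℤ) ^ (T.card) * (if T ⊆ Z then (1 : ℤ) else 0) := by
      refine (Fintype.sum_bijective compl compl_involutive.bijective _ _ fun T => ?_).symm
      rw [compl_compl]
      congr 1
      refine if_congr ?_ rfl rfl
      simp [Finset.subset_iff, hZ, Finset.mem_compl]
    rw [step1]
    simp only [mul_ite, mul_one, mul_zero]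
    rw [← Finset.sum_filter]
    have hps : univ.filter (· ⊆ Z) = Z.powerset := by
      ext T; simp [Finset.mem_powerset]
    rw [hps, Finset.sum_powerset_neg_one_pow_card]
    refine if_congr ?_ rfl rfl
    simp [hZ, Finset.filter_eq_empty_iff]
  · simp [hf]

open Classical in
lemma NNZ_eq_of_card_eq (D : G.Orientation) (Γ' : Type) [AddCommGroup Γ']
    [Fintype Γ] [Fintype Γ'] (h : Nat.card Γ = Nat.card Γ') :
    NNZ D Γ = NNZ D Γ' := by
  have hpos : 0 < Nat.card Γ := Nat.card_pos
  have key : ∀ F : Finset E,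
      Nat.card {φ : E → Γ // D.IsFlow φ ∧ ∀ e ∉ F, φ e = 0} =
        Nat.card {φ : E → Γ' // D.IsFlow φ ∧ ∀ e ∉ F, φ e = 0} := by
    intro F
    have h1 := card_flowsSupp_mul (Γ := Γ) D F
    have h2 := card_flowsSupp_mul (Γ := Γ') D F
    rw [← h] at h2
    exact Nat.eq_of_mul_eq_mul_right (pow_pos hpos _) (h1.trans h2.symm)
  have hz : (NNZ D Γ : ℤ) = (NNZ D Γ' : ℤ) := by
    rw [NNZ_int D, NNZ_int D]
    exact Finset.sum_congr rfl fun F _ => by rw [key F]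
  exact_mod_cast hz

lemma NNZ_pos_iff (D : G.Orientation) [Fintype Γ] :
    (∃ φ : E → Γ, D.IsFlow φ ∧ ∀ e, φ e ≠ 0) ↔ NNZ D Γ ≠ 0 := by
  rw [NNZ, Nat.card_ne_zero]
  constructor
  · rintro ⟨φ, h1, h2⟩
    exact ⟨⟨⟨φ, h1, h2⟩⟩, inferInstance⟩
  · rintro ⟨⟨⟨φ, h1, h2⟩⟩, -⟩
    exact ⟨φ, h1, h2⟩

section Lifting

variable (D : G.Orientation) (ρ : E → ℤ)

/-- The source of an edge in the auxiliary digraph determined by signs. -/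
noncomputable def asrc (e : E) : V := if 0 < ρ e then D.tail e else D.head e

/-- The target of an edge in the auxiliary digraph determined by signs. -/
noncomputable def adst (e : E) : V := if 0 < ρ e then D.head e else D.tail e

/-- Walks in the auxiliary digraph. -/
def AWalk : V → List E → V → Prop
  | u, [], w => u = w
  | u, e :: l, w => asrc D ρ e = u ∧ AWalk (adst D ρ e) l w

lemma awalk_append {u w : V} (l₁ l₂ : List E) :
    AWalk D ρ u (l₁ ++ l₂) w ↔ ∃ m, AWalk D ρ u l₁ m ∧ AWalk D ρ m l₂ w := by
  induction l₁ generalizing u with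
  | nil =>
      constructor
      · intro h; exact ⟨u, rfl, h⟩
      · rintro ⟨m, hm, h⟩
        have hm' : u = m := hm
        rw [hm']; exact h
  | cons e l ih =>
      constructor
      · intro h
        have h' : asrc D ρ e = u ∧ AWalk D ρ (adst D ρ e) (l ++ l₂) w := h
        obtain ⟨m, h2, h3⟩ := ih.1 h'.2
        exact ⟨m, ⟨h'.1, h2⟩, h3⟩
      · rintro ⟨m, ⟨h1, h2⟩, h3⟩
        exact ⟨h1, ih.2 ⟨m, h2, h3⟩⟩

lemma awalk_snoc {u w : V} {l : List E} (h : AWalk D ρ u l w) (e : E)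
    (he : asrc D ρ e = w) : AWalk D ρ u (l ++ [e]) (adst D ρ e) := by
  rw [awalk_append]
  exact ⟨w, h, he, rfl⟩

lemma awalk_dedup {u w : V} {l : List E} (h : AWalk D ρ u l w) :
    ∃ l', l'.Nodup ∧ AWalk D ρ u l' w := by
  classical
  induction l generalizing u with
  | nil => exact ⟨[], List.nodup_nil, h⟩
  | cons e l ih =>
      obtain ⟨h1, h2⟩ := h
      obtain ⟨l', hnd, hw⟩ := ih h2
      by_cases he : e ∈ l'
      · obtain ⟨a, b, rfl⟩ := List.append_of_mem he
        rw [awalk_append] at hw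
        obtain ⟨m, hw1, hm, hw2⟩ := hw
        refine ⟨e :: b, ?_, h1, hw2⟩
        have := List.Nodup.of_append_right hnd
        exact this
      · exact ⟨e :: l', List.nodup_cons.2 ⟨he, hnd⟩, h1, hw⟩

open Classical in
lemma awalk_telescope (v : V) {u w : V} {l : List E} (h : AWalk D ρ u l w) :
    (l.map (fun e => (if adst D ρ e = v then (1 : ℤ) else 0) -
      (if asrc D ρ e = v then (1 : ℤ) else 0))).sum =
      (if w = v then (1 : ℤ) else 0) - (if u = v then (1 : ℤ) else 0) := by
  induction l generalizing u with
  | nil =>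
      have h' : u = w := h
      rw [h']; simp
  | cons e l ih =>
      have h' : asrc D ρ e = u ∧ AWalk D ρ (adst D ρ e) l w := h
      rw [List.map_cons, List.sum_cons, ih h'.2, h'.1]
      abel

/-- `ρ` is an integer lift of the `ZMod q`-valued map `f` with entries of
absolute value in `[1, q-1]`. -/
def IsLift (q : ℕ) (f : E → ZMod q) (ρ : E → ℤ) : Prop :=
  ∀ e, 1 ≤ |ρ e| ∧ |ρ e| ≤ (q : ℤ) - 1 ∧ ((ρ e : ℤ) : ZMod q) = f e

lemma bnd_dvd_of_isLift (D : G.Orientation) {q : ℕ} {f : E → ZMod q} {ρ : E → ℤ}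
    (hf : D.IsFlow f) (hρ : IsLift q f ρ) (v : V) : (q : ℤ) ∣ bnd D ρ v := by
  rw [← ZMod.intCast_zmod_eq_zero_iff_dvd]
  rw [show ((bnd D ρ v : ℤ) : ZMod q) = bnd D (fun e => ((ρ e : ℤ) : ZMod q)) v from
    (bnd_map D (Int.castAddHom (ZMod q)) ρ v).symm]
  rw [show (fun e => ((ρ e : ℤ) : ZMod q)) = f from funext fun e => (hρ e).2.2]
  exact (isFlow_iff_bnd D f).1 hf v

open Classical in
lemma improve (D : G.Orientation) {q : ℕ} (hq : 2 ≤ q) {f : E → ZMod q}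
    (hf : D.IsFlow f) {ρ : E → ℤ} (hρP : IsLift q f ρ)
    (hzero : ∃ v, bnd D ρ v ≠ 0) :
    ∃ ρ', IsLift q f ρ' ∧ ∑ v, |bnd D ρ' v| < ∑ v, |bnd D ρ v| := by
  classical
  have hq' : (0 : ℤ) < q := by exact_mod_cast Nat.lt_of_lt_of_le Nat.zero_lt_two hq
  have hdvd : ∀ v, (q : ℤ) ∣ bnd D ρ v := bnd_dvd_of_isLift D hf hρP
  have hsum0 : ∑ v, bnd D ρ v = 0 := sum_bnd D ρ
  obtain ⟨x, hx⟩ : ∃ x, 0 < bnd D ρ x := by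
    by_contra hno
    push_neg at hno
    obtain ⟨v0, hv0⟩ := hzero
    have := (Finset.sum_eq_zero_iff_of_nonpos (fun v _ => hno v)).1 hsum0
    exact hv0 (this v0 (mem_univ v0))
  have hρne : ∀ e, ρ e ≠ 0 := by
    intro e h
    have := (hρP e).1
    rw [h] at this
    simp at this
  -- the set of vertices reachable from x in the auxiliary digraph
  set X : Finset V := univ.filter (fun v => ∃ l, AWalk D ρ x l v) with hX
  have hxX : x ∈ X := by
    simp only [hX, Finset.mem_filter, Finset.mem_univ, true_and]
    exact ⟨[], rfl⟩
  have hclosed : ∀ e, asrc D ρ e ∈ X → adst D ρ e ∈ X := by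
    intro e he
    simp only [hX, Finset.mem_filter, Finset.mem_univ, true_and] at he ⊢
    obtain ⟨l, hl⟩ := he
    exact ⟨l ++ [e], awalk_snoc D ρ hl e rfl⟩
  have hcut : ∑ v ∈ X, bnd D ρ v ≤ 0 := by
    rw [cut_bnd]
    refine Finset.sum_nonpos fun e _ => ?_
    by_cases ht : D.tail e ∈ X <;> by_cases hh : D.head e ∈ X
    · simp [ht, hh]
    · have hneg : ρ e < 0 := by
        rcases lt_or_gt_of_ne (hρne e) with h | h
        · exact h
        · exfalso
          apply hh
          have hdst : adst D ρ e = D.head e := if_pos h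
          rw [← hdst]
          exact hclosed e (by rw [show asrc D ρ e = D.tail e from if_pos h]; exact ht)
      simp only [ht, hh, if_pos, if_neg, if_true, if_false]
      omega
    · have hpos : 0 < ρ e := by
        rcases lt_or_gt_of_ne (hρne e) with h | h
        · exfalso
          apply ht
          have hdst : adst D ρ e = D.tail e := if_neg (by omega)
          rw [← hdst]
          exact hclosed e (by rw [show asrc D ρ e = D.head e from if_neg (by omega)]; exact hh)
        · exact h
      simp only [ht, hh, if_true, if_false]
      omega
    · simp [ht, hh]
  obtain ⟨y, hyX, hy⟩ : ∃ y ∈ X, bnd D ρ y < 0 := by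
    by_contra hno
    push_neg at hno
    have := Finset.single_le_sum (fun v hv => hno v hv) hxX
    linarith
  obtain ⟨l0, hl0⟩ : ∃ l, AWalk D ρ x l y := by
    simpa only [hX, Finset.mem_filter, Finset.mem_univ, true_and] using hyX
  obtain ⟨l, hnd, hl⟩ := awalk_dedup D ρ hl0
  have hxy : x ≠ y := fun h => by rw [h] at hx; linarith
  have hbx : (q : ℤ) ≤ bnd D ρ x := Int.le_of_dvd hx (hdvd x)
  have hby : bnd D ρ y ≤ -(q : ℤ) := by
    have h1 : (q : ℤ) ≤ -bnd D ρ y := Int.le_of_dvd (by linarith) ((dvd_neg).2 (hdvd y))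
    linarith
  -- the improved lift
  set ρ' : E → ℤ := fun e => if e ∈ l then (if 0 < ρ e then ρ e - q else ρ e + q) else ρ e
    with hρ'def
  have hP' : IsLift q f ρ' := by
    intro e
    obtain ⟨h1, h2, h3⟩ := hρP e
    have hb := abs_le.mp h2
    by_cases he : e ∈ l
    · by_cases hs : 0 < ρ e
      · have hv : ρ' e = ρ e - q := by simp [hρ'def, he, hs]
        have habs : 1 ≤ ρ e := by
          rw [abs_of_pos hs] at h1; exact h1
        refine ⟨?_, ?_, ?_⟩
        · rw [hv, abs_of_neg (by omega)]; omega
        · rw [hv, abs_of_neg (by omega)]; omega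
        · rw [hv]; push_cast; simp [h3]
      · have hneg : ρ e < 0 := lt_of_le_of_ne (not_lt.1 hs) (hρne e)
        have hv : ρ' e = ρ e + q := by simp [hρ'def, he, hs]
        have habs : ρ e ≤ -1 := by
          rw [abs_of_neg hneg] at h1; omega
        refine ⟨?_, ?_, ?_⟩
        · rw [hv, abs_of_pos (by omega)]; omega
        · rw [hv, abs_of_pos (by omega)]; omega
        · rw [hv]; push_cast; simp [h3]
    · have hv : ρ' e = ρ e := by simp [hρ'def, he]
      rw [hv]
      exact ⟨h1, h2, h3⟩
  -- boundary change along the walk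
  have hbnd' : ∀ v, bnd D ρ' v = bnd D ρ v +
      (q : ℤ) * ((if y = v then (1 : ℤ) else 0) - (if x = v then (1 : ℤ) else 0)) := by
    intro v
    set d : E → ℤ := fun e => if e ∈ l then (if 0 < ρ e then -(q : ℤ) else q) else 0
      with hd
    have hsplit : bnd D ρ' v = bnd D ρ v + bnd D d v := by
      rw [← bnd_add]
      congr 1
      funext e
      simp only [hρ'def, hd, Pi.add_apply]
      split_ifs <;> ring
    rw [hsplit]
    congr 1
    have hterm : ∀ e, ((if D.tail e = v then d e else 0) - (if D.head e = v then d e else 0))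
        = (if e ∈ l then (q : ℤ) * ((if adst D ρ e = v then (1 : ℤ) else 0) -
            (if asrc D ρ e = v then (1 : ℤ) else 0)) else 0) := by
      intro e
      by_cases he : e ∈ l
      · by_cases hs : 0 < ρ e
        · simp only [hd, he, hs, if_true, asrc, adst]
          split_ifs <;> ring
        · simp only [hd, he, hs, if_true, if_false, asrc, adst]
          split_ifs <;> ring
      · simp [hd, he]
    calc bnd D d v
        = ∑ e, ((if D.tail e = v then d e else 0) - (if D.head e = v then d e else 0)) := rfl
      _ = ∑ e, (if e ∈ l then (q : ℤ) * ((if adst D ρ e = v then (1 : ℤ) else 0) -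
            (if asrc D ρ e = v then (1 : ℤ) else 0)) else 0) :=
          Finset.sum_congr rfl fun e _ => hterm e
      _ = ∑ e ∈ l.toFinset, (q : ℤ) * ((if adst D ρ e = v then (1 : ℤ) else 0) -
            (if asrc D ρ e = v then (1 : ℤ) else 0)) := by
          rw [← Finset.sum_filter]
          congr 1
          ext e
          simp
      _ = (l.map (fun e => (q : ℤ) * ((if adst D ρ e = v then (1 : ℤ) else 0) -
            (if asrc D ρ e = v then (1 : ℤ) else 0)))).sum := by
          rw [List.sum_toFinset _ hnd]
      _ = (q : ℤ) * (l.map (fun e => ((if adst D ρ e = v then (1 : ℤ) else 0) -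
            (if asrc D ρ e = v then (1 : ℤ) else 0)))).sum := by
          rw [← List.sum_map_mul_left]
      _ = (q : ℤ) * ((if y = v then (1 : ℤ) else 0) - (if x = v then (1 : ℤ) else 0)) := by
          rw [awalk_telescope D ρ v hl]
  -- pointwise estimate
  have hpt : ∀ v, |bnd D ρ' v| ≤ |bnd D ρ v| - (if v = x then (q : ℤ) else 0) -
      (if v = y then (q : ℤ) else 0) := by
    intro v
    rw [hbnd' v]
    by_cases hvx : v = x
    · subst hvx
      rw [if_neg (fun h : y = v => hxy h.symm), if_pos rfl, if_pos rfl,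
        if_neg (fun h : v = y => hxy h)]
      have hval : bnd D ρ v + (q : ℤ) * ((0 : ℤ) - 1) = bnd D ρ v - q := by ring
      rw [hval, abs_of_nonneg (by linarith), abs_of_pos hx]
      linarith
    · by_cases hvy : v = y
      · subst hvy
        rw [if_pos rfl, if_neg (fun h : x = v => hxy h), if_neg hvx, if_pos rfl]
        have hval : bnd D ρ v + (q : ℤ) * ((1 : ℤ) - 0) = bnd D ρ v + q := by ring
        rw [hval, abs_of_nonpos (by linarith), abs_of_neg hy]
        linarith
      · rw [if_neg (fun h : y = v => hvy h.symm), if_neg (fun h : x = v => hvx h.symm),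
          if_neg hvx, if_neg hvy]
        have hval : bnd D ρ v + (q : ℤ) * ((0 : ℤ) - 0) = bnd D ρ v := by ring
        rw [hval]
        linarith [le_refl |bnd D ρ v|]
  refine ⟨ρ', hP', ?_⟩
  have hsum := Finset.sum_le_sum (fun v (_ : v ∈ univ) => hpt v)
  have h2 : ∑ v, (|bnd D ρ v| - (if v = x then (q : ℤ) else 0) -
      (if v = y then (q : ℤ) else 0)) = (∑ v, |bnd D ρ v|) - q - q := by
    rw [Finset.sum_sub_distrib, Finset.sum_sub_distrib,
      Finset.sum_ite_eq' univ x (fun _ => (q : ℤ)), Finset.sum_ite_eq' univ y (fun _ => (q : ℤ))]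
    simp
  rw [h2] at hsum
  linarith

open Classical in
lemma zmod_flow_to_int (D : G.Orientation) {q : ℕ} (hq : 2 ≤ q) (f : E → ZMod q)
    (hf : D.IsFlow f) (hnz : ∀ e, f e ≠ 0) :
    ∃ φ : E → ℤ, D.IsFlow φ ∧ ∀ e, 1 ≤ |φ e| ∧ |φ e| ≤ (q : ℤ) - 1 := by
  classical
  haveI : NeZero q := ⟨by omega⟩
  have hP0 : IsLift q f (fun e => ((f e).val : ℤ)) := by
    intro e
    beta_reduce
    have hval : (f e).val ≠ 0 := fun h => hnz e ((ZMod.val_eq_zero _).1 h)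
    have hlt : ((f e).val : ℤ) < (q : ℤ) := by exact_mod_cast ZMod.val_lt (f e)
    have hge : (1 : ℤ) ≤ ((f e).val : ℤ) := by exact_mod_cast Nat.one_le_iff_ne_zero.2 hval
    refine ⟨?_, ?_, ?_⟩
    · rw [abs_of_nonneg (by positivity)]; exact hge
    · rw [abs_of_nonneg (by positivity)]; omega
    · push_cast; simp [ZMod.natCast_val]
  have hex : ∃ n : ℕ, ∃ ρ, IsLift q f ρ ∧ (∑ v, |bnd D ρ v|).toNat = n :=
    ⟨_, _, hP0, rfl⟩
  obtain ⟨ρ, hρ, hn⟩ := Nat.find_spec hex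
  by_cases hzero : ∀ v, bnd D ρ v = 0
  · exact ⟨ρ, (isFlow_iff_bnd D ρ).2 hzero, fun e => ⟨(hρ e).1, (hρ e).2.1⟩⟩
  · exfalso
    push_neg at hzero
    obtain ⟨ρ', hρ', hlt⟩ := improve D hq hf hρ hzero
    have hmin := Nat.find_min' hex ⟨ρ', hρ', rfl⟩
    have h0 : 0 ≤ ∑ v, |bnd D ρ' v| := Finset.sum_nonneg fun v _ => abs_nonneg _
    have h1 : 0 ≤ ∑ v, |bnd D ρ v| := Finset.sum_nonneg fun v _ => abs_nonneg _
    omega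

end Lifting

end NZAux

open Multigraph in
/-- Tutte. For an orientation `D` of a finite multigraph `G` and an
integer `q ≥ 2`, `D` admits a nowhere-zero `q`-flow (an integer flow `φ` with
`1 ≤ |φ e| ≤ q − 1` for every edge) if and only if for every additive abelian group `Γ`
of order `q`, `D` admits a nowhere-zero `Γ`-flow. -/
theorem nowhere_zero_q_flow_iff_group_flow {V E : Type} [Fintype V] [Fintype E]
    (G : Multigraph V E) (D : G.Orientation) (q : ℕ) (hq : 2 ≤ q) :
    (∃ φ : E → ℤ, D.IsFlow φ ∧ ∀ e, 1 ≤ |φ e| ∧ |φ e| ≤ (q : ℤ) - 1) ↔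
      ∀ (Γ : Type) [AddCommGroup Γ] [Fintype Γ], Fintype.card Γ = q →
        ∃ φ : E → Γ, D.IsFlow φ ∧ ∀ e, φ e ≠ 0 := by
  haveI : NeZero q := ⟨by omega⟩
  constructor
  · rintro ⟨φ, hφ, hb⟩ Γ _ _ hcard
    have hz : ∃ f : E → ZMod q, D.IsFlow f ∧ ∀ e, f e ≠ 0 :=
      int_flow_to_zmod D q φ hφ hb
    have hc : Nat.card Γ = Nat.card (ZMod q) := by
      rw [Nat.card_eq_fintype_card, Nat.card_eq_fintype_card, hcard, ZMod.card]
    have heq := NNZ_eq_of_card_eq (Γ := Γ) D (ZMod q) hc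
    have hnz := (NNZ_pos_iff (Γ := ZMod q) D).1 hz
    have hne : NNZ D Γ ≠ 0 := by rw [heq]; exact hnz
    exact (NNZ_pos_iff D).2 hne
  · intro h
    obtain ⟨f, hf, hnz⟩ := h (ZMod q) (ZMod.card q)
    exact zmod_flow_to_int D hq f hf hnz
end

section
/- For any finite multigraph G = (V,E), any orientation D of G, and any finite additive abelian group Γ of order q, the number of nowhere-zero Γ-flows on D equals Σ_{E'⊆E} (−1)^{|E|−|E'|} q^{|E'|+c(E')−|V|}, where c(E') is the number of connected components of the spanning subgraph (V,E'). In particular, this number depends only on G and q, not on the orientation D or on the structure of Γ. -/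
/-!
Inclusion–exclusion over the set of edges on which a flow vanishes reduces the count to the
number of flows supported on each edge set `E'`, which are exactly the flows of the spanning
subgraph `(V, E')`. For any graph, the flows are the kernel of the boundary map `Γ^E → Γ^V`, and
the image of that map is the kernel of the surjection `Γ^V → Γ^{components}` summing over each
component: a vertex function with zero sum on every component is a sum of differences
`x·(δ_u - δ_w)` with `u, w` joined by a path, each of which is a boundary. Hence there are
`q^|E| / q^(|V| - c)` flows.
-/

open Finset

section Pushforward

variable {ι κ μ : Type*} [Fintype ι] [DecidableEq κ] (M : Type*) [AddCommMonoid M]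

-- Sums over the fibres of `k`; for injective `k` this is extension by zero.
noncomputable def Pi.pushforward (k : ι → κ) : (ι → M) →+ (κ → M) :=
  ∑ i, (AddMonoidHom.single _ (k i)).comp (Pi.evalAddMonoidHom _ i)

variable {M}

theorem Pi.pushforward_apply (k : ι → κ) (φ : ι → M) (j : κ) :
    Pi.pushforward M k φ j = ∑ i with k i = j, φ i := by
  simp [Pi.pushforward, Pi.single_apply, sum_filter, eq_comm]

theorem Pi.pushforward_single [DecidableEq ι] (k : ι → κ) (i : ι) (x : M) :
    Pi.pushforward M k (Pi.single i x) = Pi.single (k i) x := by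
  ext j
  simp [Pi.pushforward_apply, Pi.single_apply, eq_comm]

theorem Pi.pushforward_apply_self {k : ι → κ} (hk : Function.Injective k) (φ : ι → M) (i : ι) :
    Pi.pushforward M k φ (k i) = φ i := by
  classical
  simp [Pi.pushforward_apply, hk.eq_iff, sum_filter]

theorem Pi.pushforward_apply_eq_zero {k : ι → κ} (φ : ι → M) {j : κ} (hj : j ∉ Set.range k) :
    Pi.pushforward M k φ j = 0 := by
  rw [Pi.pushforward_apply]
  exact sum_eq_zero fun i hi => absurd ⟨i, (mem_filter.1 hi).2⟩ hj

theorem Pi.pushforward_injective {k : ι → κ} (hk : Function.Injective k) :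
    Function.Injective (Pi.pushforward M k) := fun φ ψ h => funext fun i => by
  simpa only [Pi.pushforward_apply_self hk] using congrFun h (k i)

theorem Pi.pushforward_comp_self {k : ι → κ} (hk : Function.Injective k) {φ : κ → M}
    (hφ : ∀ j ∉ Set.range k, φ j = 0) : Pi.pushforward M k (φ ∘ k) = φ := funext fun j => by
  by_cases hj : j ∈ Set.range k
  · obtain ⟨i, rfl⟩ := hj
    exact Pi.pushforward_apply_self hk _ i
  · rw [Pi.pushforward_apply_eq_zero _ hj, hφ j hj]

theorem Pi.pushforward_comp [Fintype κ] [DecidableEq μ] (k : ι → κ) (k' : κ → μ) :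
    (Pi.pushforward M k').comp (Pi.pushforward M k) = Pi.pushforward M (k' ∘ k) := by
  classical
  refine AddMonoidHom.functions_ext _ _ _ fun i x => ?_
  simp [Pi.pushforward_single]

theorem Pi.pushforward_id [DecidableEq ι] : Pi.pushforward M (id : ι → ι) = AddMonoidHom.id _ :=
  AddMonoidHom.functions_ext _ _ _ fun i x => by simp [Pi.pushforward_single]

theorem Pi.pushforward_surjective [Fintype κ] {k : ι → κ} (hk : Function.Surjective k) :
    Function.Surjective (Pi.pushforward M k) := by
  classical
  intro g
  refine ⟨Pi.pushforward M (Function.surjInv hk) g, ?_⟩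
  rw [← AddMonoidHom.comp_apply, Pi.pushforward_comp,
    (Function.rightInverse_surjInv hk).id, Pi.pushforward_id, AddMonoidHom.id_apply]

end Pushforward

theorem AddMonoidHom.card_ker_mul_card_range {A B : Type*} [AddGroup A] [AddGroup B]
    (f : A →+ B) : Nat.card f.ker * Nat.card f.range = Nat.card A := by
  rw [← AddSubgroup.index_ker, AddSubgroup.card_mul_index]

theorem Nat.eq_pow_sub_of_mul_pow_eq {x q n m : ℕ} (hq : 0 < q) (h : x * q ^ n = q ^ m) :
    x = q ^ (m - n) := by
  rcases (Nat.one_le_iff_ne_zero.2 hq.ne').eq_or_lt with rfl | hq1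
  · simpa using h
  · have hnm : n ≤ m := (Nat.pow_dvd_pow_iff_le_right hq1).1 (Dvd.intro_left x h)
    rw [← Nat.sub_add_cancel hnm, pow_add] at h
    exact Nat.eq_of_mul_eq_mul_right (pow_pos hq _) h

theorem card_forall_ne_zero_eq_sum {ι M : Type*} [Fintype ι] [Zero M] (P : (ι → M) → Prop)
    [Finite {φ // P φ}] :
    (Nat.card {φ // P φ ∧ ∀ i, φ i ≠ 0} : ℤ) =
      ∑ s : Finset ι,
        (-1 : ℤ) ^ (Fintype.card ι - #s) * Nat.card {φ // P φ ∧ ∀ i ∉ s, φ i = 0} := by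
  classical
  have := Fintype.ofFinite {φ // P φ}
  have card_eq (Q : (ι → M) → Prop) :
      Nat.card {φ // P φ ∧ Q φ} = #({φ : {φ // P φ} | Q φ} : Finset _) := by
    rw [← Nat.card_congr (Equiv.subtypeSubtypeEquivSubtypeInter P Q), Nat.card_eq_fintype_card,
      Fintype.card_subtype]
  set Z : ι → Finset {φ // P φ} := fun i => {φ | φ.1 i = 0}
  calc (Nat.card {φ // P φ ∧ ∀ i, φ i ≠ 0} : ℤ)
      = #(univ.inf fun i => (Z i)ᶜ) := by
        rw [card_eq]; congr 2; ext φ; simp [Z, mem_inf]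
    _ = ∑ t : Finset ι, (-1 : ℤ) ^ #t * #(t.inf Z) := by
        rw [inclusion_exclusion_card_inf_compl, powerset_univ]
    _ = _ := by
        refine Fintype.sum_equiv (compl_involutive.toPerm _) _ _ fun t => ?_
        have hcard : Fintype.card ι - #tᶜ = #t := by
          rw [card_compl]; have := card_le_univ t; omega
        rw [Function.Involutive.coe_toPerm, hcard, card_eq]
        congr 3; ext φ; simp [Z, mem_inf]

namespace Multigraph

variable {V E : Type} {G : Multigraph V E}

theorem Orientation.mk_tail_eq_mk_head (D : G.Orientation) {F : Set E} {e : E} (he : e ∈ F) :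
    Quotient.mk (G.reachSetoid F) (D.tail e) = Quotient.mk (G.reachSetoid F) (D.head e) :=
  Quotient.sound <| .rel _ _ ⟨e, he, by rcases D.consistent e with h | h <;> simp [h]⟩

open Classical

noncomputable def Orientation.boundary [Fintype E] (D : G.Orientation) (Γ : Type)
    [AddCommGroup Γ] : (E → Γ) →+ (V → Γ) :=
  Pi.pushforward Γ D.tail - Pi.pushforward Γ D.head

section Boundary

variable [Fintype E] (D : G.Orientation) {Γ : Type} [AddCommGroup Γ]

theorem Orientation.isFlow_iff_boundary_eq_zero (φ : E → Γ) :
    D.IsFlow φ ↔ D.boundary Γ φ = 0 := by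
  simp [Orientation.IsFlow, Orientation.boundary, funext_iff, Pi.pushforward_apply, sub_eq_zero]

theorem Orientation.boundary_single (e : E) (x : Γ) :
    D.boundary Γ (Pi.single e x) = Pi.single (D.tail e) x - Pi.single (D.head e) x := by
  simp [Orientation.boundary, Pi.pushforward_single]

theorem Orientation.single_sub_single_mem_range_boundary {u w : V} (h : G.Reach Set.univ u w)
    (x : Γ) : Pi.single u x - Pi.single w x ∈ (D.boundary Γ).range := by
  induction h with
  | rel u w huw =>
    obtain ⟨e, -, hends⟩ := huw
    have harc : D.tail e = u ∧ D.head e = w ∨ D.tail e = w ∧ D.head e = u := by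
      rcases D.consistent e with h | h <;> rcases hends with h' | h' <;> simp [h, h']
    rcases harc with ⟨rfl, rfl⟩ | ⟨rfl, rfl⟩
    · exact ⟨Pi.single e x, D.boundary_single e x⟩
    · exact ⟨Pi.single e (-x), by
        rw [D.boundary_single, Pi.single_neg, Pi.single_neg, neg_sub_neg]⟩
  | refl u => simp
  | symm u w _ ih => simpa using (D.boundary Γ).range.neg_mem ih
  | trans u v w _ _ ih₁ ih₂ => simpa using (D.boundary Γ).range.add_mem ih₁ ih₂

theorem Orientation.range_boundary_eq_ker [Fintype V] :
    (D.boundary Γ).range = (Pi.pushforward Γ (Quotient.mk (G.reachSetoid Set.univ))).ker := by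
  apply le_antisymm
  · rintro - ⟨φ, rfl⟩
    have hπ : (Quotient.mk _ ∘ D.tail : E → Quotient (G.reachSetoid Set.univ)) =
        Quotient.mk _ ∘ D.head := funext fun e => D.mk_tail_eq_mk_head (Set.mem_univ e)
    rw [AddMonoidHom.mem_ker, Orientation.boundary, AddMonoidHom.sub_apply, map_sub,
      ← AddMonoidHom.comp_apply, ← AddMonoidHom.comp_apply, Pi.pushforward_comp,
      Pi.pushforward_comp, hπ, sub_self]
  · intro f hf
    set r : V → V := Quotient.out ∘ Quotient.mk (G.reachSetoid Set.univ)
    have hdiff : f - Pi.pushforward Γ r f ∈ (D.boundary Γ).range := by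
      rw [← Finset.univ_sum_single f, map_sum, ← Finset.sum_sub_distrib]
      refine AddSubgroup.sum_mem _ fun v _ => ?_
      rw [Pi.pushforward_single]
      exact D.single_sub_single_mem_range_boundary
        (Relation.EqvGen.symm _ _ (Quotient.mk_out (s := G.reachSetoid Set.univ) v)) _
    have hr : Pi.pushforward Γ r f = 0 := by
      rw [← Pi.pushforward_comp, AddMonoidHom.comp_apply, AddMonoidHom.mem_ker.1 hf, map_zero]
    simpa [hr] using hdiff

theorem Orientation.card_flows [Fintype V] [Fintype Γ] :
    Nat.card {φ : E → Γ // D.IsFlow φ} =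
      Fintype.card Γ ^ (Fintype.card E + G.numComponents - Fintype.card V) := by
  set π := Pi.pushforward Γ (Quotient.mk (G.reachSetoid Set.univ))
  have hflows : Nat.card {φ : E → Γ // D.IsFlow φ} = Nat.card (D.boundary Γ).ker :=
    Nat.card_congr (Equiv.subtypeEquivRight D.isFlow_iff_boundary_eq_zero)
  have hπ : Nat.card π.range = Fintype.card Γ ^ G.numComponents := by
    rw [AddMonoidHom.range_eq_top.2 (Pi.pushforward_surjective (M := Γ) Quotient.mk_surjective),
      AddSubgroup.card_top, Nat.card_fun, Nat.card_eq_fintype_card (α := Γ)]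
    rfl
  have hE := (D.boundary Γ).card_ker_mul_card_range
  have hV := π.card_ker_mul_card_range
  rw [← D.range_boundary_eq_ker, hπ] at hV
  rw [hflows]
  simp only [Nat.card_eq_fintype_card, Fintype.card_fun] at hE hV ⊢
  refine Nat.eq_pow_sub_of_mul_pow_eq Fintype.card_pos ?_
  rw [← hV, ← mul_assoc, hE, pow_add]

end Boundary

def spanningSubgraph (G : Multigraph V E) (F : Set E) : Multigraph V F where
  fst e := G.fst e
  snd e := G.snd e

def Orientation.restrict (D : G.Orientation) (F : Set E) :
    (G.spanningSubgraph F).Orientation where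
  tail e := D.tail e
  head e := D.head e
  consistent e := D.consistent e

theorem reachSetoid_spanningSubgraph (F : Set E) :
    (G.spanningSubgraph F).reachSetoid Set.univ = G.reachSetoid F := by
  unfold reachSetoid
  congr 1
  ext a b
  simp [edgeRelOn, spanningSubgraph]

theorem numComponents_spanningSubgraph (F : Set E) :
    (G.spanningSubgraph F).numComponents = G.ncomp F := by
  rw [numComponents, ncomp, ncomp, reachSetoid_spanningSubgraph]

theorem Orientation.boundary_restrict [Fintype E] (D : G.Orientation) (Γ : Type) [AddCommGroup Γ]
    (F : Set E) [Fintype F] :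
    (D.restrict F).boundary Γ = (D.boundary Γ).comp (Pi.pushforward Γ Subtype.val) := by
  rw [Orientation.boundary, Orientation.boundary, AddMonoidHom.sub_comp, Pi.pushforward_comp,
    Pi.pushforward_comp]
  rfl

theorem Orientation.card_flows_supported [Fintype V] [Fintype E] (D : G.Orientation) (Γ : Type)
    [AddCommGroup Γ] [Fintype Γ] (E' : Finset E) :
    Nat.card {φ : E → Γ // D.IsFlow φ ∧ ∀ e ∉ E', φ e = 0} =
      Fintype.card Γ ^ (#E' + G.ncomp ↑E' - Fintype.card V) := by
  have hflow (ψ : (↑E' : Set E) → Γ) :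
      (D.restrict ↑E').IsFlow ψ ↔ D.IsFlow (Pi.pushforward Γ Subtype.val ψ) := by
    rw [isFlow_iff_boundary_eq_zero, isFlow_iff_boundary_eq_zero, boundary_restrict]
    rfl
  let extend (ψ : {ψ // (D.restrict ↑E').IsFlow ψ}) :
      {φ : E → Γ // D.IsFlow φ ∧ ∀ e ∉ E', φ e = 0} :=
    ⟨Pi.pushforward Γ Subtype.val ψ.1, (hflow ψ.1).1 ψ.2, fun e he =>
      Pi.pushforward_apply_eq_zero _ (by simpa using he)⟩
  have hbij : Function.Bijective extend := by
    refine ⟨fun ψ₁ ψ₂ h => Subtype.ext (Pi.pushforward_injective Subtype.val_injective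
      (congrArg Subtype.val h)), fun φ => ?_⟩
    have hext : Pi.pushforward Γ Subtype.val (φ.1 ∘ Subtype.val (p := (· ∈ (↑E' : Set E)))) =
        φ.1 :=
      Pi.pushforward_comp_self Subtype.val_injective fun e he => φ.2.2 e (by simpa using he)
    exact ⟨⟨φ.1 ∘ Subtype.val, (hflow _).2 (by rw [hext]; exact φ.2.1)⟩, Subtype.ext hext⟩
  rw [← Nat.card_congr (Equiv.ofBijective extend hbij), card_flows,
    numComponents_spanningSubgraph]
  simp

end Multigraph

open Multigraph in
/-- For any orientation `D` of a finite multigraph `G = (V,E)` and any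
finite additive abelian group `Γ` of order `q`, the number of nowhere-zero `Γ`-flows on
`D` equals `Σ_{E'⊆E} (−1)^{|E|−|E'|} q^{|E'|+c(E')−|V|}`; in particular it depends only
on `G` and `q`. -/
theorem card_nowhere_zero_flows {V E : Type} [Fintype V] [Fintype E]
    (G : Multigraph V E) (D : G.Orientation) (Γ : Type) [AddCommGroup Γ] [Fintype Γ] :
    (Nat.card {φ : E → Γ // D.IsFlow φ ∧ ∀ e, φ e ≠ 0} : ℤ) =
      ∑ E' : Finset E, (-1 : ℤ) ^ (Fintype.card E - E'.card) *
        (Fintype.card Γ : ℤ) ^ (E'.card + G.ncomp ↑E' - Fintype.card V) := by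
  rw [card_forall_ne_zero_eq_sum]
  refine Finset.sum_congr rfl fun E' _ => ?_
  rw [D.card_flows_supported Γ E', Nat.cast_pow]
end

section
/- Let G be a bridgeless connected finite multigraph and e an edge of G joining u₁ and u₂ such that G − e is separable. Suppose H₁ and H₂ are edge-disjoint subgraphs of G − e with E(H₁) ∪ E(H₂) = E(G − e), V(H₁) ∪ V(H₂) = V(G), V(H₁) ∩ V(H₂) = {v} for some vertex v of G, and uᵢ ∈ V(Hᵢ) for i = 1,2. Let Gᵢ = Hᵢ + v uᵢ (the graph obtained from Hᵢ by adding a new edge joining v and uᵢ) for i = 1,2. Then (q − 1)·F(G,q) = F(G₁,q)·F(G₂,q) as polynomials in q. -/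
theorem Finset.coe_toLeft {α β : Type*} (u : Finset (α ⊕ β)) :
    (u.toLeft : Set α) = Sum.inl ⁻¹' (u : Set (α ⊕ β)) := by
  ext; simp

theorem Finset.coe_toRight {α β : Type*} (u : Finset (α ⊕ β)) :
    (u.toRight : Set β) = Sum.inr ⁻¹' (u : Set (α ⊕ β)) := by
  ext; simp

namespace Multigraph

open Polynomial Finset

variable {V V' E E' : Type}

def ends (G : Multigraph V E) (f : E) : Sym2 V := s(G.fst f, G.snd f)

section Reach

variable (G : Multigraph V E)

theorem edgeRelOn_iff {F : Set E} {a b : V} :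
    G.edgeRelOn F a b ↔ ∃ f ∈ F, G.ends f = s(a, b) := by
  simp only [edgeRelOn, ends, Sym2.eq_iff]

theorem reach_equivalence (F : Set E) : Equivalence (G.Reach F) :=
  Relation.EqvGen.is_equivalence _

variable {G}

theorem Reach.refl (F : Set E) (x : V) : G.Reach F x x := (G.reach_equivalence F).refl x

theorem Reach.symm {F : Set E} {x y : V} (h : G.Reach F x y) : G.Reach F y x :=
  (G.reach_equivalence F).symm h

theorem Reach.trans {F : Set E} {x y z : V} (h : G.Reach F x y) (h' : G.Reach F y z) :
    G.Reach F x z :=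
  (G.reach_equivalence F).trans h h'

theorem reach_comm {F : Set E} {x y : V} : G.Reach F x y ↔ G.Reach F y x :=
  ⟨Reach.symm, Reach.symm⟩

theorem reach_of_ends_eq {F : Set E} {f : E} {a b : V} (hf : f ∈ F) (h : G.ends f = s(a, b)) :
    G.Reach F a b :=
  .rel _ _ ((G.edgeRelOn_iff).2 ⟨f, hf, h⟩)

theorem reach_of_mem {F : Set E} {f : E} (hf : f ∈ F) : G.Reach F (G.fst f) (G.snd f) :=
  reach_of_ends_eq hf rfl

theorem Reach.lift {W : Type} {r : W → W → Prop} (hr : Equivalence r) (φ : V → W) {F : Set E}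
    (hF : ∀ f ∈ F, r (φ (G.fst f)) (φ (G.snd f))) {x y : V} (h : G.Reach F x y) :
    r (φ x) (φ y) := by
  induction h with
  | rel a b hab =>
    obtain ⟨f, hf, ⟨rfl, rfl⟩ | ⟨rfl, rfl⟩⟩ := hab
    exacts [hF f hf, hr.symm (hF f hf)]
  | refl => exact hr.refl _
  | symm _ _ _ ih => exact hr.symm ih
  | trans _ _ _ _ _ ih ih' => exact hr.trans ih ih'

theorem Reach.mono {F F' : Set E} (hFF' : F ⊆ F') {x y : V} (h : G.Reach F x y) :
    G.Reach F' x y :=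
  h.lift (G.reach_equivalence F') id fun _ hf => reach_of_mem (hFF' hf)

theorem Reach.map {G' : Multigraph V' E'} (φ : V → V') (ι : E → E')
    (hends : ∀ f, G'.ends (ι f) = (G.ends f).map φ) {F : Set E} {x y : V} (h : G.Reach F x y) :
    G'.Reach (ι '' F) (φ x) (φ y) :=
  h.lift (G'.reach_equivalence _) φ fun f hf =>
    reach_of_ends_eq (Set.mem_image_of_mem ι hf) (hends f)

theorem reach_empty_iff {x y : V} : G.Reach ∅ x y ↔ x = y :=
  ⟨fun h => h.lift eq_equivalence id fun _ hf => hf.elim, fun h => h ▸ Reach.refl _ _⟩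

theorem reach_insert_iff_of_reach {F : Set E} {f : E} (hf : G.Reach F (G.fst f) (G.snd f))
    {x y : V} : G.Reach (insert f F) x y ↔ G.Reach F x y := by
  refine ⟨fun h => h.lift (G.reach_equivalence F) id fun f' hf' => ?_,
    Reach.mono (Set.subset_insert f F)⟩
  rcases Set.mem_insert_iff.1 hf' with rfl | hf'
  exacts [hf, reach_of_mem hf']

theorem edgeRelOn_image {G' : Multigraph V E'} (ι : E' → E)
    (hends : ∀ f, G.ends (ι f) = G'.ends f) (F : Set E') :
    G.edgeRelOn (ι '' F) = G'.edgeRelOn F := by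
  ext a b
  simp only [edgeRelOn_iff, Set.exists_mem_image, hends]

theorem reach_image {G' : Multigraph V E'} (ι : E' → E)
    (hends : ∀ f, G.ends (ι f) = G'.ends f) (F : Set E') :
    G.Reach (ι '' F) = G'.Reach F := by
  rw [Reach, Reach, edgeRelOn_image ι hends]

theorem ncomp_image {G' : Multigraph V E'} (ι : E' → E)
    (hends : ∀ f, G.ends (ι f) = G'.ends f) (F : Set E') :
    G.ncomp (ι '' F) = G'.ncomp F := by
  rw [ncomp, ncomp, reachSetoid, reachSetoid, edgeRelOn_image ι hends]

variable (G) in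
theorem addEdge_ncomp_image_inl (x y : V) (F : Set E) :
    (G.addEdge x y).ncomp (Sum.inl '' F) = G.ncomp F :=
  ncomp_image Sum.inl (fun _ => rfl) F

variable (G) in
theorem addEdge_reach_image_inl (x y : V) (F : Set E) :
    (G.addEdge x y).Reach (Sum.inl '' F) = G.Reach F :=
  reach_image Sum.inl (fun _ => rfl) F

end Reach

section Ncomp

variable (G : Multigraph V E)

theorem ncomp_empty : G.ncomp ∅ = Nat.card V :=
  Nat.card_congr (Equiv.ofBijective _ ⟨fun _ _ h => reach_empty_iff.1 (Quotient.exact h),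
    Quotient.mk_surjective⟩).symm

theorem ncomp_insert_of_reach {F : Set E} {f : E} (hf : G.Reach F (G.fst f) (G.snd f)) :
    G.ncomp (insert f F) = G.ncomp F := by
  have : G.reachSetoid (insert f F) = G.reachSetoid F :=
    Setoid.ext fun _ _ => reach_insert_iff_of_reach hf
  rw [ncomp, ncomp, this]

/-- The old components other than that of `snd f` correspond bijectively to the new ones. -/
theorem ncomp_insert_of_not_reach [Finite V] {F : Set E} {f : E}
    (hf : ¬ G.Reach F (G.fst f) (G.snd f)) :
    G.ncomp F = G.ncomp (insert f F) + 1 := by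
  classical
  let s := G.reachSetoid F
  let s' := G.reachSetoid (insert f F)
  let q : {c : Quotient s // c ≠ ⟦G.snd f⟧} → Quotient s' :=
    fun c => Quotient.lift (fun x => ⟦x⟧)
      (fun _ _ h => Quotient.sound (Reach.mono (Set.subset_insert f F) (by exact h))) c.1
  -- collapsing the class of `snd f` onto that of `fst f` is constant on the new components
  let φ : V → Quotient s := fun x => if G.Reach F x (G.snd f) then ⟦G.fst f⟧ else ⟦x⟧
  have hφ : ∀ {x y}, G.Reach (insert f F) x y → φ x = φ y := fun h =>
    h.lift eq_equivalence φ fun f' hf' => by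
      rcases Set.mem_insert_iff.1 hf' with rfl | hf'
      · simp only [φ, if_neg hf, if_pos (Reach.refl F _)]
      · have hr := reach_of_mem (G := G) hf'
        by_cases hb : G.Reach F (G.fst f') (G.snd f)
        · simp only [φ, if_pos hb, if_pos (hr.symm.trans hb)]
        · simp only [φ, if_neg hb, if_neg fun h => hb (hr.trans h)]
          exact Quotient.sound hr
  have hq : Function.Bijective q := by
    constructor
    · rintro ⟨c, hc⟩ ⟨d, hd⟩ h
      induction c using Quotient.inductionOn with | h x => ?_
      induction d using Quotient.inductionOn with | h y => ?_
      have hx : ¬ G.Reach F x (G.snd f) := fun h => hc (Quotient.sound h)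
      have hy : ¬ G.Reach F y (G.snd f) := fun h => hd (Quotient.sound h)
      have := hφ (Quotient.exact h)
      simp only [φ, if_neg hx, if_neg hy] at this
      exact Subtype.ext this
    · intro z
      induction z using Quotient.inductionOn with | h x => ?_
      by_cases hx : G.Reach F x (G.snd f)
      · refine ⟨⟨⟦G.fst f⟧, fun h => hf (Quotient.exact h)⟩, Quotient.sound ?_⟩
        exact (reach_of_mem (Set.mem_insert f F)).trans (hx.mono (Set.subset_insert f F)).symm
      · exact ⟨⟨⟦x⟧, fun h => hx (Quotient.exact h)⟩, rfl⟩
  rw [ncomp, ncomp, ← Nat.card_congr (Equiv.ofBijective q hq),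
    ← Nat.card_congr (Equiv.optionSubtypeNe (⟦G.snd f⟧ : Quotient s)), Finite.card_option]

theorem ncomp_insert_add_ncomp [Finite V] [Finite V'] {G' : Multigraph V' E'} {F : Set E}
    {F' : Set E'} {f : E} {f' : E'}
    (h : G.Reach F (G.fst f) (G.snd f) ↔ G'.Reach F' (G'.fst f') (G'.snd f')) :
    G.ncomp (insert f F) + G'.ncomp F' = G.ncomp F + G'.ncomp (insert f' F') := by
  by_cases hf : G.Reach F (G.fst f) (G.snd f)
  · rw [G.ncomp_insert_of_reach hf, G'.ncomp_insert_of_reach (h.1 hf)]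
  · rw [G.ncomp_insert_of_not_reach hf, G'.ncomp_insert_of_not_reach (mt h.2 hf)]
    omega

theorem card_le_card_add_ncomp [Finite V] (A : Finset E) :
    Nat.card V ≤ #A + G.ncomp A := by
  classical
  induction A using Finset.induction_on with
  | empty => simp [ncomp_empty]
  | insert f A hfA ih =>
    rw [coe_insert, card_insert_of_notMem hfA]
    by_cases hf : G.Reach A (G.fst f) (G.snd f)
    · rw [G.ncomp_insert_of_reach hf]; omega
    · have := G.ncomp_insert_of_not_reach hf; omega

end Ncomp

section FlowSums

variable (G : Multigraph V E) [Fintype E]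

noncomputable def flowTerm (A : Finset E) : ℝ[X] :=
  (-1) ^ (Fintype.card E - #A) * X ^ (#A + G.ncomp A - Nat.card V)

open Classical in
noncomputable def reachSum (x y : V) : ℝ[X] :=
  ∑ A : Finset E, if G.Reach A x y then G.flowTerm A else 0

theorem flowPoly_eq_sum_flowTerm [Finite V] : G.flowPoly = ∑ A : Finset E, G.flowTerm A := by
  rw [flowPoly, Subsingleton.elim (Fintype.ofFinite E) ‹_›, Nat.card_eq_fintype_card]
  rfl

theorem reachSum_comm (x y : V) : G.reachSum x y = G.reachSum y x := by
  classical
  exact Fintype.sum_congr _ _ fun A => if_congr reach_comm rfl rfl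

theorem flowPoly_congr [Finite V] {G' : Multigraph V E'} [Fintype E'] (σ : E' ≃ E)
    (hends : ∀ f, G.ends (σ f) = G'.ends f) : G'.flowPoly = G.flowPoly := by
  rw [flowPoly_eq_sum_flowTerm, flowPoly_eq_sum_flowTerm]
  refine Fintype.sum_equiv σ.finsetCongr _ _ fun A => ?_
  rw [flowTerm, flowTerm, Fintype.card_congr σ, Equiv.finsetCongr_apply, card_map, coe_map,
    Equiv.coe_toEmbedding, ncomp_image σ hends]

theorem flowTerm_addEdge_disjSum_empty (x y : V) (A : Finset E) :
    (G.addEdge x y).flowTerm (A.disjSum ∅) = -G.flowTerm A := by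
  have hA : #A ≤ Fintype.card E := card_le_univ A
  have hcoe : (↑(A.disjSum (∅ : Finset Unit)) : Set (E ⊕ Unit)) = Sum.inl '' ↑A := by
    ext (a | b) <;> simp
  rw [flowTerm, flowTerm, hcoe, addEdge_ncomp_image_inl, card_disjSum, card_empty,
    add_zero, Fintype.card_sum, Fintype.card_unit, Nat.sub_add_comm hA, pow_succ]
  ring

open Classical in
theorem flowTerm_addEdge_disjSum_singleton [Finite V] (x y : V) (A : Finset E) :
    (G.addEdge x y).flowTerm (A.disjSum {()}) =
      if G.Reach A x y then X * G.flowTerm A else G.flowTerm A := by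
  have hA : Nat.card V ≤ #A + G.ncomp A := G.card_le_card_add_ncomp A
  have hcoe : (↑(A.disjSum {()}) : Set (E ⊕ Unit)) = insert (Sum.inr ()) (Sum.inl '' ↑A) := by
    ext (a | b) <;> simp
  have hreach : (G.addEdge x y).Reach (Sum.inl '' ↑A) x y ↔ G.Reach A x y := by
    rw [addEdge_reach_image_inl]
  rw [flowTerm, flowTerm, hcoe, card_disjSum, card_singleton, Fintype.card_sum, Fintype.card_unit,
    Nat.add_sub_add_right]
  split_ifs with h
  · rw [ncomp_insert_of_reach _ (hreach.2 h), addEdge_ncomp_image_inl,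
      show #A + 1 + G.ncomp A - Nat.card V = #A + G.ncomp A - Nat.card V + 1 by omega, pow_succ]
    ring
  · have := (G.addEdge x y).ncomp_insert_of_not_reach (f := Sum.inr ()) (mt hreach.1 h)
    rw [addEdge_ncomp_image_inl] at this
    rw [show #A + 1 + (G.addEdge x y).ncomp (insert (Sum.inr ()) (Sum.inl '' ↑A)) =
      #A + G.ncomp A by omega]

theorem flowPoly_addEdge [Finite V] (x y : V) :
    (G.addEdge x y).flowPoly = (X - 1) * G.reachSum x y := by
  rw [flowPoly_eq_sum_flowTerm, reachSum, mul_sum,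
    ← sumEquiv.toEquiv.symm.sum_comp, Fintype.sum_prod_type]
  refine Fintype.sum_congr _ _ fun A => ?_
  have : (univ : Finset (Finset Unit)) = {∅, {()}} := rfl
  rw [this, sum_pair (by decide)]
  change (G.addEdge x y).flowTerm (A.disjSum ∅) + (G.addEdge x y).flowTerm (A.disjSum {()}) = _
  rw [flowTerm_addEdge_disjSum_empty, flowTerm_addEdge_disjSum_singleton]
  split_ifs <;> ring

end FlowSums

namespace Subgraph

variable {G : Multigraph V E}

@[simps]
def edgeSum (H₁ H₂ : G.Subgraph) : Multigraph V (H₁.edges ⊕ H₂.edges) where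
  fst := Sum.elim (fun f => G.fst f) (fun f => G.fst f)
  snd := Sum.elim (fun f => G.snd f) (fun f => G.snd f)

open Classical in
noncomputable def retract (H : G.Subgraph) {v : V} (hv : v ∈ H.verts) (x : V) : H.verts :=
  if hx : x ∈ H.verts then ⟨x, hx⟩ else ⟨v, hv⟩

theorem retract_of_mem (H : G.Subgraph) {v x : V} (hv : v ∈ H.verts) (hx : x ∈ H.verts) :
    H.retract hv x = ⟨x, hx⟩ :=
  dif_pos hx

theorem retract_of_mem_of_inter_eq {H H' : G.Subgraph} {v x : V}
    (hvint : H'.verts ∩ H.verts = {v}) (hv : v ∈ H.verts) (hx : x ∈ H'.verts) :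
    H.retract hv x = ⟨v, hv⟩ := by
  unfold retract
  split_ifs with h
  exacts [Subtype.ext (hvint.subset ⟨hx, h⟩), rfl]

variable (H₁ H₂ : G.Subgraph)

theorem reach_edgeSum_image_inl {B : Set H₁.edges} {x y : H₁.verts}
    (h : H₁.toMultigraph.Reach B x y) : (H₁.edgeSum H₂).Reach (Sum.inl '' B) x y :=
  h.map Subtype.val Sum.inl fun _ => rfl

theorem reach_edgeSum_image_inr {B : Set H₂.edges} {x y : H₂.verts}
    (h : H₂.toMultigraph.Reach B x y) : (H₁.edgeSum H₂).Reach (Sum.inr '' B) x y :=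
  h.map Subtype.val Sum.inr fun _ => rfl

end Subgraph

open Subgraph

variable {G : Multigraph V E} {H₁ H₂ : G.Subgraph} {v : V}

/-- Since `H₁` and `H₂` meet only in `v`, retracting onto `H₁` collapses every edge of `H₂`. -/
theorem Reach.retract_left (hvint : H₁.verts ∩ H₂.verts = {v}) (hv : v ∈ H₁.verts)
    {A : Set (H₁.edges ⊕ H₂.edges)} {x y : V} (h : (H₁.edgeSum H₂).Reach A x y) :
    H₁.toMultigraph.Reach (Sum.inl ⁻¹' A) (H₁.retract hv x) (H₁.retract hv y) := by
  have hvint' : H₂.verts ∩ H₁.verts = {v} := (Set.inter_comm _ _).trans hvint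
  refine h.lift (reach_equivalence _ _) _ ?_
  rintro (f | f) hf <;> simp only [edgeSum_fst, edgeSum_snd, Sum.elim_inl, Sum.elim_inr]
  · rw [retract_of_mem _ hv (H₁.fst_mem f.2), retract_of_mem _ hv (H₁.snd_mem f.2)]
    exact reach_of_mem hf
  · rw [retract_of_mem_of_inter_eq hvint' hv (H₂.fst_mem f.2),
      retract_of_mem_of_inter_eq hvint' hv (H₂.snd_mem f.2)]
    exact Reach.refl _ _

theorem Reach.retract_right (hvint : H₁.verts ∩ H₂.verts = {v}) (hv : v ∈ H₂.verts)
    {A : Set (H₁.edges ⊕ H₂.edges)} {x y : V} (h : (H₁.edgeSum H₂).Reach A x y) :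
    H₂.toMultigraph.Reach (Sum.inr ⁻¹' A) (H₂.retract hv x) (H₂.retract hv y) := by
  refine h.lift (reach_equivalence _ _) _ ?_
  rintro (f | f) hf <;> simp only [edgeSum_fst, edgeSum_snd, Sum.elim_inl, Sum.elim_inr]
  · rw [retract_of_mem_of_inter_eq hvint hv (H₁.fst_mem f.2),
      retract_of_mem_of_inter_eq hvint hv (H₁.snd_mem f.2)]
    exact Reach.refl _ _
  · rw [retract_of_mem _ hv (H₂.fst_mem f.2), retract_of_mem _ hv (H₂.snd_mem f.2)]
    exact reach_of_mem hf

namespace Subgraph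

theorem edgeSum_reach_iff_left (hvint : H₁.verts ∩ H₂.verts = {v}) (hv : v ∈ H₁.verts)
    {A : Set (H₁.edges ⊕ H₂.edges)} {x y : H₁.verts} :
    (H₁.edgeSum H₂).Reach A x y ↔ H₁.toMultigraph.Reach (Sum.inl ⁻¹' A) x y := by
  refine ⟨fun h => ?_, fun h =>
    (reach_edgeSum_image_inl H₁ H₂ h).mono (Set.image_preimage_subset _ _)⟩
  simpa only [retract_of_mem _ hv x.2, retract_of_mem _ hv y.2] using h.retract_left hvint hv

theorem edgeSum_reach_iff_right (hvint : H₁.verts ∩ H₂.verts = {v}) (hv : v ∈ H₂.verts)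
    {A : Set (H₁.edges ⊕ H₂.edges)} {x y : H₂.verts} :
    (H₁.edgeSum H₂).Reach A x y ↔ H₂.toMultigraph.Reach (Sum.inr ⁻¹' A) x y := by
  refine ⟨fun h => ?_, fun h =>
    (reach_edgeSum_image_inr H₁ H₂ h).mono (Set.image_preimage_subset _ _)⟩
  simpa only [retract_of_mem _ hv x.2, retract_of_mem _ hv y.2] using h.retract_right hvint hv

theorem edgeSum_reach_iff (hvint : H₁.verts ∩ H₂.verts = {v}) (hv₁ : v ∈ H₁.verts)
    (hv₂ : v ∈ H₂.verts) {A : Set (H₁.edges ⊕ H₂.edges)} {u₁ u₂ : V} (hu₁ : u₁ ∈ H₁.verts)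
    (hu₂ : u₂ ∈ H₂.verts) :
    (H₁.edgeSum H₂).Reach A u₁ u₂ ↔ H₁.toMultigraph.Reach (Sum.inl ⁻¹' A) ⟨u₁, hu₁⟩ ⟨v, hv₁⟩ ∧
      H₂.toMultigraph.Reach (Sum.inr ⁻¹' A) ⟨v, hv₂⟩ ⟨u₂, hu₂⟩ := by
  have hvint' : H₂.verts ∩ H₁.verts = {v} := (Set.inter_comm _ _).trans hvint
  refine ⟨fun h => ⟨?_, ?_⟩, fun ⟨h₁, h₂⟩ =>
    ((edgeSum_reach_iff_left hvint hv₁).2 h₁).trans ((edgeSum_reach_iff_right hvint hv₂).2 h₂)⟩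
  · simpa only [retract_of_mem _ hv₁ hu₁, retract_of_mem_of_inter_eq hvint' hv₁ hu₂] using
      h.retract_left hvint hv₁
  · simpa only [retract_of_mem _ hv₂ hu₂, retract_of_mem_of_inter_eq hvint hv₂ hu₁] using
      h.retract_right hvint hv₂

theorem card_add_one_eq_card_add_card [Finite V] (hvcover : H₁.verts ∪ H₂.verts = Set.univ)
    (hvint : H₁.verts ∩ H₂.verts = {v}) :
    Nat.card V + 1 = Nat.card H₁.verts + Nat.card H₂.verts := by
  have := Set.ncard_union_add_ncard_inter H₁.verts H₂.verts
  rwa [hvcover, hvint, Set.ncard_univ, Set.ncard_singleton, ← Nat.card_coe_set_eq,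
    ← Nat.card_coe_set_eq] at this

theorem edgeSum_ncomp_add_one [Finite V] (hvcover : H₁.verts ∪ H₂.verts = Set.univ)
    (hvint : H₁.verts ∩ H₂.verts = {v}) (A : Finset (H₁.edges ⊕ H₂.edges)) :
    (H₁.edgeSum H₂).ncomp A + 1 =
      H₁.toMultigraph.ncomp A.toLeft + H₂.toMultigraph.ncomp A.toRight := by
  classical
  have hv : v ∈ H₁.verts ∩ H₂.verts := hvint ▸ rfl
  induction A using Finset.induction_on with
  | empty =>
    simp only [coe_toLeft, coe_toRight, coe_empty, Set.preimage_empty, ncomp_empty]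
    exact card_add_one_eq_card_add_card hvcover hvint
  | insert f A hf ih =>
    rcases f with g | g
    · have := ncomp_insert_add_ncomp (H₁.edgeSum H₂) (G' := H₁.toMultigraph) (F := A)
        (f := Sum.inl g) (f' := g)
        (edgeSum_reach_iff_left hvint hv.1 (A := A) (x := H₁.toMultigraph.fst g)
          (y := H₁.toMultigraph.snd g))
      simp only [toLeft_insert_inl, toRight_insert_inl, coe_insert, coe_toLeft, coe_toRight]
        at this ih ⊢
      omega
    · have := ncomp_insert_add_ncomp (H₁.edgeSum H₂) (G' := H₂.toMultigraph) (F := A)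
        (f := Sum.inr g) (f' := g)
        (edgeSum_reach_iff_right hvint hv.2 (A := A) (x := H₂.toMultigraph.fst g)
          (y := H₂.toMultigraph.snd g))
      simp only [toLeft_insert_inr, toRight_insert_inr, coe_insert, coe_toLeft, coe_toRight]
        at this ih ⊢
      omega

variable [Fintype H₁.edges] [Fintype H₂.edges]

theorem edgeSum_flowTerm [Finite V] (hvcover : H₁.verts ∪ H₂.verts = Set.univ)
    (hvint : H₁.verts ∩ H₂.verts = {v}) (A : Finset (H₁.edges ⊕ H₂.edges)) :
    (H₁.edgeSum H₂).flowTerm A =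
      H₁.toMultigraph.flowTerm A.toLeft * H₂.toMultigraph.flowTerm A.toRight := by
  have hV := card_add_one_eq_card_add_card hvcover hvint
  have hc := edgeSum_ncomp_add_one hvcover hvint A
  have hA := card_toLeft_add_card_toRight (u := A)
  have h₁ := H₁.toMultigraph.card_le_card_add_ncomp A.toLeft
  have h₂ := H₂.toMultigraph.card_le_card_add_ncomp A.toRight
  have hA₁ : #A.toLeft ≤ Fintype.card H₁.edges := card_le_univ _
  have hA₂ : #A.toRight ≤ Fintype.card H₂.edges := card_le_univ _
  rw [flowTerm, flowTerm, flowTerm, Fintype.card_sum,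
    show Fintype.card H₁.edges + Fintype.card H₂.edges - #A =
      (Fintype.card H₁.edges - #A.toLeft) + (Fintype.card H₂.edges - #A.toRight) by omega,
    show #A + (H₁.edgeSum H₂).ncomp A - Nat.card V =
      (#A.toLeft + H₁.toMultigraph.ncomp A.toLeft - Nat.card H₁.verts) +
        (#A.toRight + H₂.toMultigraph.ncomp A.toRight - Nat.card H₂.verts) by omega,
    pow_add, pow_add]
  ring

theorem edgeSum_reachSum [Finite V] (hvcover : H₁.verts ∪ H₂.verts = Set.univ)
    (hvint : H₁.verts ∩ H₂.verts = {v}) (hv₁ : v ∈ H₁.verts) (hv₂ : v ∈ H₂.verts) {u₁ u₂ : V}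
    (hu₁ : u₁ ∈ H₁.verts) (hu₂ : u₂ ∈ H₂.verts) :
    (H₁.edgeSum H₂).reachSum u₁ u₂ =
      H₁.toMultigraph.reachSum ⟨u₁, hu₁⟩ ⟨v, hv₁⟩ *
        H₂.toMultigraph.reachSum ⟨v, hv₂⟩ ⟨u₂, hu₂⟩ := by
  classical
  rw [reachSum, reachSum, reachSum, sum_mul_sum, ← Fintype.sum_prod_type']
  refine Fintype.sum_equiv sumEquiv.toEquiv _ _ fun A => ?_
  rw [ite_zero_mul_ite_zero, edgeSum_flowTerm hvcover hvint]
  exact if_congr (by rw [edgeSum_reach_iff hvint hv₁ hv₂ hu₁ hu₂, ← coe_toLeft, ← coe_toRight]; rfl)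
    rfl rfl

/-- Up to relabelling its edges, `G` is `H₁.edgeSum H₂` plus the edge `e`. -/
theorem flowPoly_eq_edgeSum_addEdge [Finite V] [Fintype E] {e : E} {u₁ u₂ : V}
    (hends : G.ends e = s(u₁, u₂)) (hedis : H₁.edges ∩ H₂.edges = ∅)
    (hecover : H₁.edges ∪ H₂.edges = {e' | e' ≠ e}) :
    G.flowPoly = ((H₁.edgeSum H₂).addEdge u₁ u₂).flowPoly := by
  let ι : H₁.edges ⊕ H₂.edges → E := Sum.elim (↑) (↑)
  have hne : ∀ f, ι f ≠ e := by
    rintro (f | f)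
    exacts [hecover.subset (Or.inl f.2), hecover.subset (Or.inr f.2)]
  have hbij : Function.Bijective (Sum.elim ι fun _ : Unit => e) := by
    refine ⟨.sumElim (.sumElim Subtype.val_injective Subtype.val_injective fun f g h => ?_)
      (fun _ _ _ => rfl) fun f _ => hne f, fun x => ?_⟩
    · exact hedis.subset ⟨f.2, h ▸ g.2⟩
    · by_cases hx : x = e
      · exact ⟨.inr (), hx.symm⟩
      · rcases (hecover.symm.subset hx : x ∈ H₁.edges ∪ H₂.edges) with h | h
        exacts [⟨.inl (.inl ⟨x, h⟩), rfl⟩, ⟨.inl (.inr ⟨x, h⟩), rfl⟩]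
  refine (flowPoly_congr G (Equiv.ofBijective _ hbij) ?_).symm
  rintro ((f | f) | _)
  exacts [rfl, rfl, hends]

end Subgraph

end Multigraph

open Multigraph Polynomial in
theorem flowPoly_separable_decomposition_general {V E : Type} [Fintype V] [Fintype E]
    (G : Multigraph V E)
    (e : E) (u₁ u₂ v : V)
    (hends : (G.fst e = u₁ ∧ G.snd e = u₂) ∨ (G.fst e = u₂ ∧ G.snd e = u₁))
    (H₁ H₂ : G.Subgraph)
    (hedis : H₁.edges ∩ H₂.edges = ∅)
    (hecover : H₁.edges ∪ H₂.edges = {e' | e' ≠ e})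
    (hvcover : H₁.verts ∪ H₂.verts = Set.univ)
    (hvint : H₁.verts ∩ H₂.verts = {v})
    (hv₁ : v ∈ H₁.verts) (hv₂ : v ∈ H₂.verts)
    (hu₁ : u₁ ∈ H₁.verts) (hu₂ : u₂ ∈ H₂.verts) :
    (X - 1) * G.flowPoly =
      (H₁.toMultigraph.addEdge ⟨v, hv₁⟩ ⟨u₁, hu₁⟩).flowPoly *
        (H₂.toMultigraph.addEdge ⟨v, hv₂⟩ ⟨u₂, hu₂⟩).flowPoly := by
  classical
  rw [Subgraph.flowPoly_eq_edgeSum_addEdge (Sym2.eq_iff.2 hends) hedis hecover, flowPoly_addEdge,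
    flowPoly_addEdge, flowPoly_addEdge, Subgraph.edgeSum_reachSum hvcover hvint hv₁ hv₂ hu₁ hu₂,
    H₁.toMultigraph.reachSum_comm ⟨u₁, hu₁⟩]
  ring

open Multigraph Polynomial in
/-- Jackson. If `G` is bridgeless and connected, `e` joins `u₁` and
`u₂`, `G − e` is separable, and `H₁, H₂` decompose `G − e` sharing only the vertex `v`
with `uᵢ ∈ V(Hᵢ)`, then with `Gᵢ = Hᵢ + v uᵢ` one has
`(q − 1)·F(G,q) = F(G₁,q)·F(G₂,q)`. -/
theorem flowPoly_separable_decomposition {V E : Type} [Fintype V] [Fintype E]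
    (G : Multigraph V E) (hbl : G.Bridgeless) (hconn : G.Connected)
    (e : E) (u₁ u₂ v : V)
    (hends : (G.fst e = u₁ ∧ G.snd e = u₂) ∨ (G.fst e = u₂ ∧ G.snd e = u₁))
    (hsep : ¬ (G.deleteEdge e).NonSeparable)
    (H₁ H₂ : G.Subgraph)
    (hedis : H₁.edges ∩ H₂.edges = ∅)
    (hecover : H₁.edges ∪ H₂.edges = {e' | e' ≠ e})
    (hvcover : H₁.verts ∪ H₂.verts = Set.univ)
    (hvint : H₁.verts ∩ H₂.verts = {v})
    (hv₁ : v ∈ H₁.verts) (hv₂ : v ∈ H₂.verts)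
    (hu₁ : u₁ ∈ H₁.verts) (hu₂ : u₂ ∈ H₂.verts) :
    (X - 1) * G.flowPoly =
      (H₁.toMultigraph.addEdge ⟨v, hv₁⟩ ⟨u₁, hu₁⟩).flowPoly *
        (H₂.toMultigraph.addEdge ⟨v, hv₂⟩ ⟨u₂, hu₂⟩).flowPoly :=
  flowPoly_separable_decomposition_general G e u₁ u₂ v hends H₁ H₂ hedis hecover hvcover hvint hv₁
    hv₂ hu₁ hu₂
end

section
/- Every 3-connected finite simple graph of order n contains a cycle of length at most 2·log₂ n. -/
/-!
Vertex 3-connectivity forces minimum degree 3. Suppose every cycle is longer than `2k` and let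
`S j` be the set of vertices joined to a fixed vertex `v` by a path of length `j`. Two distinct
paths with common ends and total length at most `2k` would close a short cycle. Hence the layers
`S j`, `j ≤ k`, are disjoint; for `j < k` a vertex of `S j` has at most one neighbour on its own
path, so at least two in `S (j + 1)`, while a vertex of `S (j + 1)` has only one neighbour in
`S j`. Thus `|S j| ≥ 3 · 2 ^ (j - 1)` for `j ≥ 1`, and `S (k - 1) ∪ S k` already has
`2 ^ (k + 1) > n` vertices when `k = ⌊log₂ n⌋`.
-/

open Finset

namespace SimpleGraph

variable {V : Type*} {G : SimpleGraph V}

lemma le_degree_of_forall_ncard_lt_connected_induce_compl [Fintype V] [DecidableRel G.Adj]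
    {k : ℕ} (hcard : k < Fintype.card V)
    (hconn : ∀ S : Set V, S.ncard < k → (G.induce Sᶜ).Connected) (v : V) : k ≤ G.degree v := by
  by_contra! hdeg
  have hS : (G.neighborSet v).ncard = G.degree v := by
    rw [Set.ncard_eq_toFinset_card', ← card_neighborFinset_eq_degree]
    congr
  have hv : v ∈ (G.neighborSet v)ᶜ := G.notMem_neighborSet_self
  obtain ⟨u, hu, huv⟩ := Set.exists_ne_of_one_lt_ncard (s := (G.neighborSet v)ᶜ) (by
    have := Set.ncard_add_ncard_compl (G.neighborSet v)
    rw [Nat.card_eq_fintype_card] at this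
    omega) v
  obtain ⟨⟨x, hx⟩, hvx⟩ := ((hconn _ (hS ▸ hdeg)).preconnected ⟨v, hv⟩ ⟨u, hu⟩)
    |>.nonempty_neighborSet_left (by simpa using huv.symm)
  exact hx hvx

namespace Walk

variable {u v w z : V}

lemma IsPath.eq_of_length_add_length_lt_egirth {p q : G.Walk u v} (hp : p.IsPath)
    (hq : q.IsPath) (h : p.length + q.length < G.egirth) : p = q := by
  by_contra hne
  obtain ⟨_, _, _, c, hc, hlen⟩ := hp.exists_isCycle_length_le_add_of_ne hq hne
  exact (egirth_le_length hc).not_gt (lt_of_le_of_lt (by exact_mod_cast hlen) h)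

lemma IsPath.eq_penultimate_of_adj_of_mem_support {p : G.Walk u v} (hp : p.IsPath)
    (h : G.Adj z v) (hz : z ∈ p.support) (hg : 2 * p.length < G.egirth) :
    z = p.penultimate := by
  classical
  set t := p.takeUntil z hz
  have ht : (t.concat h).IsPath :=
    (hp.takeUntil hz).concat (endpoint_notMem_support_takeUntil hp hz h.ne.symm) h
  have hlen : t.length < p.length := length_takeUntil_lt_length hz h.ne
  rw [hp.eq_of_length_add_length_lt_egirth ht (lt_of_le_of_lt (by norm_cast; simp; omega) hg),
    penultimate_concat]

lemma IsPath.eq_penultimate_of_adj {p : G.Walk u w} {q : G.Walk u v} (hp : p.IsPath)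
    (hq : q.IsPath) (h : G.Adj w v) (hlen : q.length = p.length + 1)
    (hg : 2 * q.length < G.egirth) : w = q.penultimate := by
  classical
  by_cases hv : v ∈ p.support
  · have ht := (hp.takeUntil hv).eq_of_length_add_length_lt_egirth hq
      (lt_of_le_of_lt (by norm_cast; have := length_takeUntil_le_length p hv; omega) hg)
    have := length_takeUntil_le_length p hv
    rw [ht] at this
    omega
  · rw [← (hp.concat hv h).eq_of_length_add_length_lt_egirth hq
      (lt_of_le_of_lt (by norm_cast; simp; omega) hg), penultimate_concat]

end Walk

open scoped Classical in
noncomputable def pathLayer [Fintype V] (G : SimpleGraph V) (v : V) (j : ℕ) : Finset V :=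
  {u | ∃ p : G.Walk v u, p.IsPath ∧ p.length = j}

variable [Fintype V] {v : V}

@[simp]
lemma mem_pathLayer {u : V} {j : ℕ} :
    u ∈ G.pathLayer v j ↔ ∃ p : G.Walk v u, p.IsPath ∧ p.length = j := by
  simp [pathLayer]

lemma pathLayer_zero : G.pathLayer v 0 = {v} := by
  ext u
  rw [mem_pathLayer, mem_singleton]
  constructor
  · rintro ⟨p, -, hp⟩
    exact (Walk.eq_of_length_eq_zero hp).symm
  · rintro rfl
    exact ⟨.nil, .nil, rfl⟩

lemma neighborFinset_subset_pathLayer_one [DecidableRel G.Adj] :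
    G.neighborFinset v ⊆ G.pathLayer v 1 := by
  intro u hu
  rw [mem_neighborFinset] at hu
  exact mem_pathLayer.mpr ⟨hu.toWalk, hu.isPath_toWalk, hu.length_toWalk⟩

lemma disjoint_pathLayer {i j : ℕ} (hij : i ≠ j) (hg : i + j < G.egirth) :
    Disjoint (G.pathLayer v i) (G.pathLayer v j) := by
  refine Finset.disjoint_left.mpr fun u hi hj ↦ ?_
  obtain ⟨p, hp, rfl⟩ := mem_pathLayer.mp hi
  obtain ⟨q, hq, rfl⟩ := mem_pathLayer.mp hj
  exact hij (congrArg Walk.length (hp.eq_of_length_add_length_lt_egirth hq hg))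

lemma mul_card_pathLayer_le_card_pathLayer_succ [DecidableRel G.Adj] {d j : ℕ}
    (hδ : ∀ w, d ≤ G.degree w) (hg : 2 * (j + 1) < G.egirth) :
    (d - 1) * #(G.pathLayer v j) ≤ #(G.pathLayer v (j + 1)) := by
  classical
  have hg' : 2 * j < G.egirth := lt_of_le_of_lt (by norm_cast; omega) hg
  have above : ∀ w ∈ G.pathLayer v j,
      d - 1 ≤ #((G.pathLayer v (j + 1)).bipartiteAbove G.Adj w) := by
    intro w hw
    obtain ⟨p, hp, rfl⟩ := mem_pathLayer.mp hw
    have hback : #(G.neighborFinset w ∩ p.support.toFinset) ≤ 1 :=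
      card_le_one.mpr fun a ha b hb ↦ by
        simp only [mem_inter, mem_neighborFinset, List.mem_toFinset] at ha hb
        rw [hp.eq_penultimate_of_adj_of_mem_support ha.1.symm ha.2 hg',
          hp.eq_penultimate_of_adj_of_mem_support hb.1.symm hb.2 hg']
    have hforward : G.neighborFinset w \ p.support.toFinset ⊆
        (G.pathLayer v (p.length + 1)).bipartiteAbove G.Adj w := by
      intro z hz
      simp only [mem_sdiff, mem_neighborFinset, List.mem_toFinset] at hz
      rw [mem_bipartiteAbove, mem_pathLayer]
      exact ⟨⟨p.concat hz.1, hp.concat hz.2 hz.1, by simp⟩, hz.1⟩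
    have := card_sdiff_add_card_inter (G.neighborFinset w) p.support.toFinset
    have := card_le_card hforward
    have := card_neighborFinset_eq_degree G w ▸ hδ w
    omega
  have below : ∀ z ∈ G.pathLayer v (j + 1),
      #((G.pathLayer v j).bipartiteBelow G.Adj z) ≤ 1 := by
    intro z hz
    obtain ⟨q, hq, hqj⟩ := mem_pathLayer.mp hz
    refine card_le_one.mpr fun a ha b hb ↦ ?_
    rw [mem_bipartiteBelow, mem_pathLayer] at ha hb
    obtain ⟨⟨pa, hpa, rfl⟩, ha⟩ := ha
    obtain ⟨⟨pb, hpb, hpb'⟩, hb⟩ := hb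
    rw [hpa.eq_penultimate_of_adj hq ha hqj (hqj ▸ hg),
      hpb.eq_penultimate_of_adj hq hb (by omega) (hqj ▸ hg)]
  simpa [mul_comm] using card_mul_le_card_mul G.Adj above below

lemma mul_pow_le_card_pathLayer_succ [DecidableRel G.Adj] {d j : ℕ} (hδ : ∀ w, d ≤ G.degree w)
    (hg : 2 * (j + 1) < G.egirth) : d * (d - 1) ^ j ≤ #(G.pathLayer v (j + 1)) := by
  induction j with
  | zero =>
    simpa [← card_neighborFinset_eq_degree] using
      (hδ v).trans (card_le_card neighborFinset_subset_pathLayer_one)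
  | succ j ih =>
    calc d * (d - 1) ^ (j + 1) = (d - 1) * (d * (d - 1) ^ j) := by ring
      _ ≤ (d - 1) * #(G.pathLayer v (j + 1)) :=
        Nat.mul_le_mul_left _ (ih (lt_of_le_of_lt (by norm_cast; omega) hg))
      _ ≤ #(G.pathLayer v (j + 1 + 1)) := mul_card_pathLayer_le_card_pathLayer_succ hδ hg

theorem two_pow_succ_le_card_of_lt_egirth [Nonempty V] [DecidableRel G.Adj] {k : ℕ}
    (hδ : ∀ w, 3 ≤ G.degree w) (hk : 1 ≤ k) (hg : 2 * k < G.egirth) :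
    2 ^ (k + 1) ≤ Fintype.card V := by
  classical
  obtain ⟨v⟩ := ‹Nonempty V›
  obtain ⟨j, rfl⟩ : ∃ j, k = j + 1 := ⟨k - 1, by omega⟩
  have hsum : #(G.pathLayer v j) + #(G.pathLayer v (j + 1)) ≤ Fintype.card V := by
    rw [← card_union_of_disjoint (disjoint_pathLayer (i := j) (j := j + 1) (by omega)
      (lt_of_le_of_lt (by norm_cast; omega) hg))]
    exact card_le_univ _
  have hlast := mul_pow_le_card_pathLayer_succ (v := v) hδ hg
  rcases j with _ | i
  · simp only [pathLayer_zero, card_singleton] at hsum hlast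
    omega
  · have hprev := mul_pow_le_card_pathLayer_succ (v := v) (j := i) hδ
      (lt_of_le_of_lt (by norm_cast; omega) hg)
    norm_num [pow_succ] at hlast hprev ⊢
    omega

end SimpleGraph

/-- Balbuena–García-Vázquez. Every 3-connected finite simple graph
of order `n` (at least 4 vertices, and still connected after deleting any set of fewer
than 3 vertices) contains a cycle of length at most `2·log₂ n`. -/
theorem exists_short_cycle_of_three_connected {V : Type} [Fintype V]
    (G : SimpleGraph V) (h4 : 4 ≤ Fintype.card V)
    (h3conn : ∀ S : Set V, S.ncard < 3 → (G.induce Sᶜ).Connected) :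
    ∃ (v : V) (c : G.Walk v v), c.IsCycle ∧
      (c.length : ℝ) ≤ 2 * Real.logb 2 (Fintype.card V) := by
  classical
  have hδ : ∀ v, 3 ≤ G.degree v :=
    G.le_degree_of_forall_ncard_lt_connected_induce_compl (by omega) h3conn
  have : Nonempty V := Fintype.card_pos_iff.mp (by omega)
  set n := Fintype.card V
  have hk : 1 ≤ Nat.log 2 n := Nat.le_log_of_pow_le one_lt_two (by omega)
  by_contra! hlong
  have hg : 2 * Nat.log 2 n < G.egirth := by
    refine lt_of_lt_of_le (b := ((2 * Nat.log 2 n + 1 : ℕ) : ℕ∞)) (by norm_cast; omega)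
      (SimpleGraph.le_egirth.mpr fun a c hc ↦ ?_)
    have hlog : (Nat.log 2 n : ℝ) ≤ Real.logb 2 n := mod_cast Real.natLog_le_logb n 2
    have : (2 * Nat.log 2 n : ℝ) < c.length := by linarith [hlong a c hc]
    exact_mod_cast Nat.succ_le_of_lt (by exact_mod_cast this)
  exact (Nat.lt_pow_succ_log_self one_lt_two n).not_ge
    (SimpleGraph.two_pow_succ_le_card_of_lt_egirth hδ hk hg)
end
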